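/- arXiv:2103.08302 — 16 statements merged into one kernel-verified Lean document; each statement's English description precedes it below -/
import Mathlib

section
/- For any integer C, C ≥ 0 if and only if there exist integers x, y, z such that C = x² + y² + z² + z. -/
/-!
For `m ≡ 1 (mod 4)`, Dirichlet's theorem gives a prime `p ≡ 1 (mod 4)` with `p ≡ -1 (mod m)`, and
quadratic reciprocity makes `-m` a square mod `p`. This produces a positive definite integral
ternary quadratic form of determinant 1 with `m` as a diagonal coefficient. By Minkowski's convex
body theorem such a form takes the value 1; splitting off that vector leaves a positive binary form
of determinant 1, which Lagrange reduction turns into `x² + y²`. Hence the ternary form is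
`x² + y² + z²` in suitable coordinates, and `m` is a sum of three squares. Applied to
`m = 4C + 1`, exactly one of the three squares is odd, which gives `C = x² + y² + z² + z`.
-/

open Matrix MeasureTheory

/-- Lagrange reduction: a shear by `±1` lowers `a + c` as long as `2|b|` exceeds `a` or `c`, and
once `2|b| ≤ a, c` the relation `ac - b² = 1` forces `a = c = 1`, `b = 0`. -/
theorem exists_sq_add_sq_of_mul_sub_sq_eq_one {a b c : ℤ} (ha : 0 < a) (hdet : a * c - b ^ 2 = 1)
    (x y : ℤ) : ∃ u v : ℤ, a * x ^ 2 + 2 * b * x * y + c * y ^ 2 = u ^ 2 + v ^ 2 := by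
  have hc : 0 < c := by nlinarith [sq_nonneg b]
  obtain ⟨s, hs, hsb⟩ : ∃ s : ℤ, s ^ 2 = 1 ∧ s * b = |b| := by
    rcases le_or_gt 0 b with h | h
    · exact ⟨1, by norm_num, by rw [one_mul, abs_of_nonneg h]⟩
    · exact ⟨-1, by norm_num, by rw [abs_of_neg h]; ring⟩
  rcases lt_or_ge c (2 * |b|) with hcb | hcb
  · have hdet' : (a - 2 * (s * b) + c) * c - (b - s * c) ^ 2 = 1 := by
      linear_combination hdet - c ^ 2 * hs
    have ha' : 0 < a - 2 * (s * b) + c := by nlinarith [sq_nonneg (b - s * c)]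
    obtain ⟨u, v, huv⟩ := exists_sq_add_sq_of_mul_sub_sq_eq_one ha' hdet' x (y + s * x)
    exact ⟨u, v, by linear_combination huv + c * x ^ 2 * hs⟩
  rcases lt_or_ge a (2 * |b|) with hab | hab
  · have hdet' : a * (a - 2 * (s * b) + c) - (b - s * a) ^ 2 = 1 := by
      linear_combination hdet - a ^ 2 * hs
    obtain ⟨u, v, huv⟩ := exists_sq_add_sq_of_mul_sub_sq_eq_one ha hdet' (x + s * y) y
    exact ⟨u, v, by linear_combination huv + a * y ^ 2 * hs⟩
  have hb : 4 * b ^ 2 ≤ a * c := by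
    rw [← sq_abs b]
    nlinarith [abs_nonneg b]
  obtain ⟨rfl, rfl, rfl⟩ : a = 1 ∧ c = 1 ∧ b = 0 := ⟨by nlinarith, by nlinarith, by nlinarith⟩
  exact ⟨x, y, by ring⟩
termination_by (a + c).toNat
decreasing_by all_goals omega

theorem Int.exists_eq_mul_eq_mul_isCoprime (a b : ℤ) :
    ∃ d a' b' : ℤ, a = d * a' ∧ b = d * b' ∧ IsCoprime a' b' := by
  rcases eq_or_ne (Int.gcd a b) 0 with h | h
  · obtain ⟨rfl, rfl⟩ := Int.gcd_eq_zero_iff.mp h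
    exact ⟨0, 1, 0, by simp, by simp, isCoprime_one_left⟩
  · obtain ⟨g, a', b', -, hg, rfl, rfl⟩ := Int.exists_gcd_one' (Nat.pos_of_ne_zero h)
    exact ⟨g, a', b', mul_comm _ _, mul_comm _ _, Int.isCoprime_iff_gcd_eq_one.mpr hg⟩

theorem exists_det_eq_one_col_zero_eq (w a : Fin 3 → ℤ) (hwa : w ⬝ᵥ a = 1) :
    ∃ P : Matrix (Fin 3) (Fin 3) ℤ, P.det = 1 ∧ ∀ i, P i 0 = w i := by
  obtain ⟨d, a₀, a₁, h₀, h₁, α, β, hαβ⟩ := Int.exists_eq_mul_eq_mul_isCoprime (w 0) (w 1)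
  obtain ⟨u, v, huv⟩ : IsCoprime d (w 2) := by
    refine ⟨a 0 * a₀ + a 1 * a₁, a 2, ?_⟩
    simp only [dotProduct, Fin.sum_univ_three, h₀, h₁] at hwa
    linear_combination hwa
  refine ⟨!![w 0, -β, -v * a₀; w 1, α, -v * a₁; w 2, 0, u], ?_, fun i => by fin_cases i <;> rfl⟩
  simp only [det_fin_three, of_apply, cons_val', cons_val_zero, cons_val_one, cons_val,
    cons_val_fin_one, h₀, h₁]
  linear_combination (u * d + v * w 2) * hαβ + huv

theorem dotProduct_mulVec_transpose_mul_mul {n R : Type*} [Fintype n] [CommSemiring R]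
    (P G : Matrix n n R) (x : n → R) :
    x ⬝ᵥ (Pᵀ * G * P) *ᵥ x = (P *ᵥ x) ⬝ᵥ G *ᵥ (P *ᵥ x) := by
  rw [Matrix.mul_assoc, ← mulVec_mulVec, ← mulVec_mulVec, dotProduct_mulVec, vecMul_transpose]

/-- Completing the square, `x ⬝ A x = (x₀ + A₀₁ x₁ + A₀₂ x₂)² + q(x₁, x₂)` where the binary form
`q` has determinant `det A = 1`. -/
theorem exists_sum_three_sq_of_apply_zero_zero_eq_one {A : Matrix (Fin 3) (Fin 3) ℤ}
    (hA : A.IsSymm) (hdet : A.det = 1) (h00 : A 0 0 = 1)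
    (hpos : ∀ v ≠ 0, 0 < v ⬝ᵥ A *ᵥ v) (x : Fin 3 → ℤ) :
    ∃ a b c : ℤ, x ⬝ᵥ A *ᵥ x = a ^ 2 + b ^ 2 + c ^ 2 := by
  have h10 := hA.apply 0 1
  have h20 := hA.apply 0 2
  have h21 := hA.apply 1 2
  have hdet' : (A 1 1 - A 0 1 ^ 2) * (A 2 2 - A 0 2 ^ 2) - (A 1 2 - A 0 1 * A 0 2) ^ 2 = 1 := by
    rw [det_fin_three, h00, h10, h20, h21] at hdet
    linear_combination hdet
  have hα : 0 < A 1 1 - A 0 1 ^ 2 := by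
    have hval : ![-A 0 1, 1, 0] ⬝ᵥ A *ᵥ ![-A 0 1, 1, 0] = A 1 1 - A 0 1 ^ 2 := by
      simp only [dotProduct, mulVec, Fin.sum_univ_three, cons_val_zero, cons_val_one, cons_val, h00,
        h10]
      ring
    exact hval ▸ hpos _ (by simp [funext_iff, Fin.forall_fin_succ])
  obtain ⟨u, v, huv⟩ := exists_sq_add_sq_of_mul_sub_sq_eq_one hα hdet' (x 1) (x 2)
  refine ⟨x 0 + A 0 1 * x 1 + A 0 2 * x 2, u, v, ?_⟩
  simp only [dotProduct, mulVec, Fin.sum_univ_three]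
  linear_combination huv + x 0 ^ 2 * h00 + (x 0 * x 1) * h10 + (x 0 * x 2) * h20 +
    (x 1 * x 2) * h21

/-- `w ⬝ G w = 1` makes `w` primitive, so it is the first column of some `P ∈ SL₃(ℤ)`, and the
equivalent form `Pᵀ G P` has `1` in the corner. -/
theorem exists_sum_three_sq_of_det_eq_one {G : Matrix (Fin 3) (Fin 3) ℤ}
    (hG : G.IsSymm) (hdet : G.det = 1) (hpos : ∀ v ≠ 0, 0 < v ⬝ᵥ G *ᵥ v)
    {w : Fin 3 → ℤ} (hw : w ⬝ᵥ G *ᵥ w = 1) (x : Fin 3 → ℤ) :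
    ∃ a b c : ℤ, x ⬝ᵥ G *ᵥ x = a ^ 2 + b ^ 2 + c ^ 2 := by
  obtain ⟨P, hPdet, hPcol⟩ := exists_det_eq_one_col_zero_eq w (G *ᵥ w) hw
  have hPw : P *ᵥ Pi.single 0 1 = w := funext fun i => by simp [hPcol]
  have hPinj : Function.Injective P.mulVec :=
    mulVec_injective_of_det_ne_zero (by rw [hPdet]; exact one_ne_zero)
  have hPsurj : Function.Surjective P.mulVec :=
    mulVec_surjective_iff_isUnit.mpr ((isUnit_iff_isUnit_det P).mpr (by simp [hPdet]))
  have hA : (Pᵀ * G * P).IsSymm := by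
    simp [IsSymm, Matrix.transpose_mul, hG.eq, Matrix.mul_assoc]
  have hAdet : (Pᵀ * G * P).det = 1 := by simp [hPdet, hdet]
  have hA00 : (Pᵀ * G * P) 0 0 = 1 := by
    rw [← hw, ← hPw, ← dotProduct_mulVec_transpose_mul_mul]
    simp
  have hApos : ∀ v ≠ 0, 0 < v ⬝ᵥ (Pᵀ * G * P) *ᵥ v := fun v hv => by
    rw [dotProduct_mulVec_transpose_mul_mul]
    exact hpos _ fun h => hv (hPinj (by rw [h, mulVec_zero]))
  obtain ⟨y, rfl⟩ := hPsurj x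
  rw [← dotProduct_mulVec_transpose_mul_mul]
  exact exists_sum_three_sq_of_apply_zero_zero_eq_one hA hAdet hA00 hApos y

theorem exists_int_ne_zero_mem_of_two_pow_card_lt_volume {ι : Type*} [Fintype ι] [DecidableEq ι]
    {s : Set (ι → ℝ)} (h_symm : ∀ x ∈ s, -x ∈ s) (h_conv : Convex ℝ s)
    (h : 2 ^ Fintype.card ι < volume s) :
    ∃ c : ι → ℤ, c ≠ 0 ∧ (Int.cast ∘ c : ι → ℝ) ∈ s := by
  let L := (Submodule.span ℤ (Set.range (Pi.basisFun ℝ ι))).toAddSubgroup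
  have : Countable L :=
    inferInstanceAs (Countable (Submodule.span ℤ (Set.range (Pi.basisFun ℝ ι))))
  have hcovol : Matrix.of (Pi.basisFun ℝ ι) = 1 := by
    ext i j
    simp [one_apply, Pi.single_apply, eq_comm]
  obtain ⟨x, hx0, hxs⟩ := exists_ne_zero_mem_lattice_of_measure_mul_two_pow_lt_measure (L := L)
    (ZSpan.isAddFundamentalDomain' (Pi.basisFun ℝ ι) volume) h_symm h_conv
    (by simpa [hcovol] using h)
  obtain ⟨c, hc⟩ := (Submodule.mem_span_range_iff_exists_fun ℤ).mp x.2
  have hcx : (Int.cast ∘ c : ι → ℝ) = x := by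
    rw [← hc]
    ext i
    simp [Pi.single_apply]
  refine ⟨c, fun h => hx0 (Subtype.ext ?_), hcx ▸ hxs⟩
  rw [← hcx, h]
  simp

theorem setOf_dotProduct_self_lt_sq_eq_preimage_ball {ι : Type*} [Fintype ι] {r : ℝ}
    (hr : 0 ≤ r) :
    {y : ι → ℝ | y ⬝ᵥ y < r ^ 2} = WithLp.toLp 2 ⁻¹' Metric.ball (0 : EuclideanSpace ℝ ι) r := by
  ext y
  rw [Set.mem_preimage, mem_ball_zero_iff, ← pow_lt_pow_iff_left₀ (norm_nonneg _) hr two_ne_zero,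
    EuclideanSpace.norm_sq_eq]
  simp [dotProduct, ← sq]

theorem two_pow_three_lt_volume_setOf_dotProduct_self_lt_two :
    2 ^ 3 < volume {y : Fin 3 → ℝ | y ⬝ᵥ y < 2} := by
  have h2 : √2 ^ 2 = 2 := Real.sq_sqrt zero_le_two
  have h1 : 1 < √2 := by nlinarith [Real.sqrt_nonneg 2]
  have h3 : 1 * 3 < √2 * Real.pi := mul_lt_mul'' h1 Real.pi_gt_three zero_le_one zero_le_three
  rw [← h2, setOf_dotProduct_self_lt_sq_eq_preimage_ball (Real.sqrt_nonneg 2),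
    (PiLp.volume_preserving_toLp (Fin 3)).measure_preimage measurableSet_ball.nullMeasurableSet,
    EuclideanSpace.volume_ball_fin_three, ← ENNReal.ofReal_pow (Real.sqrt_nonneg 2),
    ← ENNReal.ofReal_mul (by positivity),
    show (2 : ENNReal) ^ 3 = ENNReal.ofReal (2 ^ 3) by norm_num,
    ENNReal.ofReal_lt_ofReal_iff (by positivity), show √2 ^ 3 = √2 ^ 2 * √2 by ring, h2]
  linarith

theorem exists_int_ne_zero_mulVec_dotProduct_self_lt_two {B : Matrix (Fin 3) (Fin 3) ℝ}
    (hB : |B.det| = 1) :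
    ∃ c : Fin 3 → ℤ, c ≠ 0 ∧ (B *ᵥ (Int.cast ∘ c)) ⬝ᵥ (B *ᵥ (Int.cast ∘ c)) < 2 := by
  have hconv : Convex ℝ {y : Fin 3 → ℝ | y ⬝ᵥ y < 2} := by
    rw [← Real.sq_sqrt zero_le_two,
      setOf_dotProduct_self_lt_sq_eq_preimage_ball (Real.sqrt_nonneg 2)]
    exact (convex_ball _ _).linear_preimage (WithLp.linearEquiv 2 ℝ (Fin 3 → ℝ)).symm.toLinearMap
  refine exists_int_ne_zero_mem_of_two_pow_card_lt_volume (s := toLin' B ⁻¹' {y | y ⬝ᵥ y < 2})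
    (fun x hx => by simpa [mulVec_neg] using hx) (hconv.linear_preimage _) ?_
  rw [Measure.addHaar_preimage_linearMap _ (by simp [LinearMap.det_toLin', ← abs_ne_zero, hB]),
    LinearMap.det_toLin', abs_inv, hB]
  simpa using two_pow_three_lt_volume_setOf_dotProduct_self_lt_two

open scoped MatrixOrder in
theorem exists_int_ne_zero_dotProduct_mulVec_lt_two {G : Matrix (Fin 3) (Fin 3) ℝ}
    (hG : G.PosSemidef) (hdet : G.det = 1) :
    ∃ c : Fin 3 → ℤ, c ≠ 0 ∧ (Int.cast ∘ c) ⬝ᵥ G *ᵥ (Int.cast ∘ c) < 2 := by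
  obtain ⟨B, rfl⟩ := CStarAlgebra.nonneg_iff_eq_star_mul_self.mp hG.nonneg
  have hB : |B.det| = 1 := by
    rw [star_eq_conjTranspose, det_mul, det_conjTranspose, star_trivial, ← sq] at hdet
    rwa [← pow_eq_one_iff_of_nonneg (abs_nonneg _) two_ne_zero, sq_abs]
  obtain ⟨c, hc0, hc⟩ := exists_int_ne_zero_mulVec_dotProduct_self_lt_two hB
  refine ⟨c, hc0, ?_⟩
  rwa [star_eq_conjTranspose, conjTranspose_eq_transpose_of_trivial, ← mulVec_mulVec,
    dotProduct_mulVec, vecMul_transpose]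

theorem Int.cast_dotProduct_mulVec {n : Type*} [Fintype n] (G : Matrix n n ℤ) (v : n → ℤ) :
    ((v ⬝ᵥ G *ᵥ v : ℤ) : ℝ) = (Int.cast ∘ v) ⬝ᵥ G.map (Int.cast : ℤ → ℝ) *ᵥ (Int.cast ∘ v) := by
  rw [← eq_intCast (Int.castRingHom ℝ), RingHom.map_dotProduct]
  congr 1
  ext i
  exact RingHom.map_mulVec _ _ _ i

theorem dotProduct_mulVec_pos_of_posDef_map {n : Type*} [Fintype n] {G : Matrix n n ℤ}
    (hG : (G.map (Int.cast : ℤ → ℝ)).PosDef) {v : n → ℤ} (hv : v ≠ 0) :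
    0 < v ⬝ᵥ G *ᵥ v := by
  have hv' : (Int.cast ∘ v : n → ℝ) ≠ 0 := fun h =>
    hv (funext fun i => Int.cast_injective (α := ℝ) (by simpa using congrFun h i))
  have := hG.dotProduct_mulVec_pos hv'
  rw [star_trivial, ← Int.cast_dotProduct_mulVec] at this
  exact_mod_cast this

theorem exists_dotProduct_mulVec_eq_one {G : Matrix (Fin 3) (Fin 3) ℤ}
    (hG : (G.map (Int.cast : ℤ → ℝ)).PosDef) (hdet : G.det = 1) :
    ∃ w : Fin 3 → ℤ, w ⬝ᵥ G *ᵥ w = 1 := by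
  obtain ⟨c, hc0, hc⟩ := exists_int_ne_zero_dotProduct_mulVec_lt_two hG.posSemidef
    (by rw [← Int.cast_det, hdet, Int.cast_one])
  rw [← Int.cast_dotProduct_mulVec] at hc
  have hlt : c ⬝ᵥ G *ᵥ c < 2 := by exact_mod_cast hc
  have hpos := dotProduct_mulVec_pos_of_posDef_map hG hc0
  exact ⟨c, by omega⟩

/-- Primes in the class of `2m - 1` modulo `4m`. -/
theorem exists_prime_mod_four_eq_one_dvd_add_one {m : ℕ} (hm : Odd m) :
    ∃ p : ℕ, p.Prime ∧ p % 4 = 1 ∧ m ∣ p + 1 := by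
  obtain ⟨j, rfl⟩ := hm
  have hcop : (4 * j + 1).Coprime (4 * (2 * j + 1)) := by
    rw [← Nat.isCoprime_iff_coprime]
    exact ⟨-(4 * j + 3), 2 * j + 1, by push_cast; ring⟩
  obtain ⟨p, -, hp, hpmod⟩ := Nat.forall_exists_prime_gt_and_modEq 0 (by omega) hcop
  refine ⟨p, hp, ?_, ?_⟩
  · have := hpmod.of_mul_right (2 * j + 1)
    unfold Nat.ModEq at this
    omega
  · have := ((hpmod.of_mul_left 4).add_right 1).trans (Nat.modEq_zero_iff_dvd.mpr ⟨2, by ring⟩)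
    exact Nat.modEq_zero_iff_dvd.mp this

/-- `(-m / p) = (m / p) = (p / m) = (-1 / m) = 1` by reciprocity; then `f = r⁻¹` for `r² = -m`. -/
theorem exists_dvd_mul_sq_add_one_of_dvd_add_one {m p : ℕ} [Fact p.Prime] (hm : m % 4 = 1)
    (hp : p % 4 = 1) (hmp : m ∣ p + 1) : ∃ f : ℤ, (p : ℤ) ∣ m * f ^ 2 + 1 := by
  have hpodd : Odd p := Nat.odd_iff.mpr (by omega)
  have hm0 : (m : ZMod p) ≠ 0 := by
    rw [Ne, ZMod.natCast_eq_zero_iff]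
    intro h
    have : p ∣ 1 := (Nat.dvd_add_right (dvd_refl p)).mp (h.trans hmp)
    exact (Fact.out : p.Prime).one_lt.ne' (Nat.dvd_one.mp this)
  have hpm : (p : ℤ) % m = -1 % m := by
    refine (Int.modEq_iff_dvd.mpr ?_).symm
    rw [sub_neg_eq_add]
    exact_mod_cast hmp
  have hJ : legendreSym p (-(m : ℤ)) = 1 := by
    rw [jacobiSym.legendreSym.to_jacobiSym, jacobiSym.neg _ hpodd, ZMod.χ₄_nat_one_mod_four hp,
      one_mul, jacobiSym.quadratic_reciprocity_one_mod_four hm hpodd, jacobiSym.mod_left' hpm,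
      jacobiSym.at_neg_one (Nat.odd_iff.mpr (by omega)), ZMod.χ₄_nat_one_mod_four hm]
  obtain ⟨r, hr⟩ := (legendreSym.eq_one_iff p (by simpa using hm0)).mp hJ
  push_cast at hr
  have hr0 : r ≠ 0 := by
    rintro rfl
    simp_all
  refine ⟨(r⁻¹).val, (ZMod.intCast_zmod_eq_zero_iff_dvd _ _).mp ?_⟩
  push_cast
  rw [ZMod.natCast_val, ZMod.cast_id]
  field_simp
  linear_combination -hr

theorem posDef_of_mul_eq_add_one_of_mul_sq_add_one_eq_mul {m p e f k : ℝ} (hm : 0 < m)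
    (hp : 0 < p) (he : m * e = p + 1) (hk : m * f ^ 2 + 1 = p * k) :
    (!![m, 1, 0; 1, e, f; 0, f, k]).PosDef := by
  refine posDef_iff_dotProduct_mulVec.mpr ⟨?_, fun x hx => ?_⟩
  · ext i j
    fin_cases i <;> fin_cases j <;> rfl
  have hid : m * p * (star x ⬝ᵥ !![m, 1, 0; 1, e, f; 0, f, k] *ᵥ x) =
      p * (m * x 0 + x 1) ^ 2 + (p * x 1 + f * m * x 2) ^ 2 + m * x 2 ^ 2 := by
    simp only [dotProduct, mulVec, Fin.sum_univ_three, Pi.star_apply, star_trivial, of_apply,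
      cons_val', cons_val_zero, cons_val_one, cons_val, cons_val_fin_one]
    linear_combination (p * x 1 ^ 2) * he - (m * x 2 ^ 2) * hk
  refine pos_of_mul_pos_right (hid ▸ ?_ : 0 < m * p * _) (by positivity)
  by_contra! hle
  obtain ⟨⟨h0, h1⟩, h2⟩ : (p * (m * x 0 + x 1) ^ 2 = 0 ∧ (p * x 1 + f * m * x 2) ^ 2 = 0) ∧
      m * x 2 ^ 2 = 0 := by
    rw [← add_eq_zero_iff_of_nonneg (by positivity) (by positivity),
      ← add_eq_zero_iff_of_nonneg (by positivity) (by positivity)]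
    exact le_antisymm hle (by positivity)
  simp only [mul_eq_zero, hm.ne', hp.ne', false_or, pow_eq_zero_iff two_ne_zero] at h0 h1 h2
  have h1 : x 1 = 0 := by simpa [h2, hp.ne'] using h1
  have h0 : x 0 = 0 := by simpa [h1, hm.ne'] using h0
  exact hx (funext fun i => by fin_cases i <;> assumption)

theorem exists_sum_three_sq_of_mod_four_eq_one {m : ℕ} (hm : m % 4 = 1) :
    ∃ a b c : ℤ, (m : ℤ) = a ^ 2 + b ^ 2 + c ^ 2 := by
  obtain ⟨p, hp, hp4, hmp⟩ :=
    exists_prime_mod_four_eq_one_dvd_add_one (Nat.odd_iff.mpr (by omega : m % 2 = 1))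
  have : Fact p.Prime := ⟨hp⟩
  obtain ⟨f, k, hk⟩ := exists_dvd_mul_sq_add_one_of_dvd_add_one hm hp4 hmp
  obtain ⟨e, he⟩ := hmp
  have hme : (m : ℤ) * e = p + 1 := by exact_mod_cast he.symm
  -- `det G = k (m e - 1) - m f² = p k - m f² = 1`
  let G : Matrix (Fin 3) (Fin 3) ℤ := !![(m : ℤ), 1, 0; 1, (e : ℤ), f; 0, f, k]
  have hG : G.IsSymm := by
    ext i j
    fin_cases i <;> fin_cases j <;> rfl
  have hdet : G.det = 1 := by
    simp only [G, det_fin_three, of_apply, cons_val', cons_val_zero, cons_val_one, cons_val,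
      cons_val_fin_one]
    linear_combination k * hme - hk
  have hpos : (G.map (Int.cast : ℤ → ℝ)).PosDef := by
    convert posDef_of_mul_eq_add_one_of_mul_sq_add_one_eq_mul (m := m) (p := p) (e := e) (f := f)
      (k := k) (Nat.cast_pos.mpr (by omega)) (Nat.cast_pos.mpr hp.pos) (by exact_mod_cast hme)
      (by exact_mod_cast hk) using 1
    ext i j
    fin_cases i <;> fin_cases j <;> simp [G]
  obtain ⟨w, hw⟩ := exists_dotProduct_mulVec_eq_one hpos hdet
  obtain ⟨a, b, c, habc⟩ := exists_sum_three_sq_of_det_eq_one hG hdet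
    (fun v hv => dotProduct_mulVec_pos_of_posDef_map hpos hv) hw (Pi.single 0 1)
  exact ⟨a, b, c, by simpa [G] using habc⟩

/-- Squares are `0` or `1` mod 4, so exactly one of `x, y, z` is odd. -/
theorem exists_sq_add_sq_add_sq_add_self_of_four_mul_add_one {C x y z : ℤ}
    (h : 4 * C + 1 = x ^ 2 + y ^ 2 + z ^ 2) : ∃ a b c : ℤ, C = a ^ 2 + b ^ 2 + c ^ 2 + c := by
  obtain ⟨a, rfl | rfl⟩ := Int.even_or_odd' x <;> obtain ⟨b, rfl | rfl⟩ := Int.even_or_odd' y <;>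
    obtain ⟨c, rfl | rfl⟩ := Int.even_or_odd' z <;> ring_nf at h <;>
    first
    | exact ⟨a, b, c, by linarith⟩
    | exact ⟨a, c, b, by linarith⟩
    | exact ⟨b, c, a, by linarith⟩
    | omega

theorem three_squares_plus_z (C : ℤ) :
    C ≥ 0 ↔ ∃ x y z : ℤ, C = x^2 + y^2 + z^2 + z := by
  constructor
  · intro hC
    lift C to ℕ using hC
    obtain ⟨x, y, z, h⟩ := exists_sum_three_sq_of_mod_four_eq_one (m := 4 * C + 1) (by omega)
    exact exists_sq_add_sq_add_sq_add_self_of_four_mul_add_one (by exact_mod_cast h)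
  · rintro ⟨x, y, z, rfl⟩
    nlinarith [sq_nonneg x, sq_nonneg y, sq_nonneg (2 * z + 1)]
end

section
/- For any integer C, C ≠ 0 if and only if there exist integers u, v such that C = (2u+1)(3v+1). -/
/-! Every nonzero integer is `3 ^ a * D` with `3 ∤ D`. Since `D ≡ 1` or `D ≡ -1 (mod 3)`, it is
`(2u + 1)(3v + 1)` with `u = 0` or `u = -1`, and the odd factor `3 ^ a` is absorbed into `2u + 1`. -/

lemma exists_eq_odd_mul_of_not_three_dvd {D : ℤ} (hD : ¬ 3 ∣ D) :
    ∃ u v : ℤ, D = (2*u + 1) * (3*v + 1) := by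
  rcases (by omega : D % 3 = 1 ∨ D % 3 = 2) with h | h
  · exact ⟨0, (D - 1) / 3, by omega⟩
  · exact ⟨-1, (-D - 1) / 3, by omega⟩

lemma exists_eq_three_pow_mul_of_ne_zero {C : ℤ} (hC : C ≠ 0) :
    ∃ (a : ℕ) (D : ℤ), C = 3 ^ a * D ∧ ¬ 3 ∣ D :=
  ⟨_, (Int.finiteMultiplicity_iff.mpr ⟨by decide, hC⟩).exists_eq_pow_mul_and_not_dvd⟩

theorem nonzero_iff_form (C : ℤ) :
    C ≠ 0 ↔ ∃ u v : ℤ, C = (2*u + 1) * (3*v + 1) := by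
  constructor
  · intro hC
    obtain ⟨a, D, rfl, hD⟩ := exists_eq_three_pow_mul_of_ne_zero hC
    obtain ⟨u, v, rfl⟩ := exists_eq_odd_mul_of_not_three_dvd hD
    have hodd : Odd (3 ^ a * (2*u + 1)) := (Odd.pow (by decide)).mul (odd_two_mul_add_one u)
    obtain ⟨w, hw⟩ := hodd
    exact ⟨w, v, by rw [← mul_assoc, hw]⟩
  · rintro ⟨u, v, rfl⟩
    exact mul_ne_zero (by omega) (by omega)
end

section
/- For any integer C, C ≥ 0 if and only if there exists a nonzero integer x such that (4C+2)x² + 1 is a perfect square (a square of some integer). -/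
/-! For `C ≥ 0`, `d = 4C + 2` is positive and, being `2 mod 4`, not a square, so the Pell
equation `m² - d x² = 1` has a nontrivial solution. For `C < 0` we have `d ≤ -2`, so
`d x² + 1 < 0` as soon as `x ≠ 0`. -/

theorem Int.not_isSquare_four_mul_add_two (C : ℤ) : ¬ IsSquare (4 * C + 2) := by
  rintro ⟨r, hr⟩
  have hr_even : Even r := by
    have hrr : Even (r * r) := ⟨2 * C + 1, by rw [← hr]; ring⟩
    simpa only [Int.even_mul, or_self] using hrr
  obtain ⟨k, rfl⟩ := hr_even
  have h4 : (4 : ℤ) ∣ 2 := ⟨k * k - C, by linarith⟩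
  norm_num at h4

theorem Int.mul_sq_add_one_neg {d x : ℤ} (hd : d ≤ -2) (hx : x ≠ 0) : d * x ^ 2 + 1 < 0 := by
  have hx2 : 0 < x ^ 2 := sq_pos_of_ne_zero hx
  nlinarith

theorem nonneg_iff_pell (C : ℤ) :
    C ≥ 0 ↔ ∃ x : ℤ, x ≠ 0 ∧ ∃ m : ℤ, (4*C + 2) * x^2 + 1 = m^2 := by
  constructor
  · intro hC
    obtain ⟨m, x, hpell, hx⟩ :=
      Pell.exists_of_not_isSquare (by omega) (Int.not_isSquare_four_mul_add_two C)
    exact ⟨x, hx, m, by linarith⟩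
  · rintro ⟨x, hx, m, hm⟩
    by_contra! hC
    have hneg := Int.mul_sq_add_one_neg (d := 4 * C + 2) (by omega) hx
    nlinarith [sq_nonneg m]
end

section
/- Let C₁, …, Cₙ be integers and D₁, …, Dₙ positive integers with |Cᵢ| ≤ Dᵢ for all i. Then (C₁ ≥ 0 ∧ ⋯ ∧ Cₙ ≥ 0) holds if and only if for every integer x with 0 ≤ x ≤ D₁⋯Dₙ one has ∏_{i=1}^n (x + Cᵢ + 1) ≠ 0. -/
/-!
The product vanishes iff one factor does, and `x + Cᵢ + 1` vanishes only at `x = -Cᵢ - 1`, which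
lies in `[0, ∏ Dⱼ]` exactly when `Cᵢ < 0`, since `-Cᵢ ≤ Dᵢ ≤ ∏ Dⱼ`.
-/

open Finset

theorem single_le_prod_of_one_le {ι R : Type*} [Fintype ι] [CommSemiring R] [PartialOrder R]
    [IsOrderedRing R] {f : ι → R} (hf : ∀ j, 1 ≤ f j) (i : ι) : f i ≤ ∏ j, f j := by
  classical
  rw [← mul_prod_erase univ f (mem_univ i)]
  exact le_mul_of_one_le_right (zero_le_one.trans (hf i)) (one_le_prod fun j _ => hf j)

theorem nonneg_iff_forall_add_add_one_ne_zero {c P : ℤ} (hcP : -c ≤ P + 1) :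
    0 ≤ c ↔ ∀ x : ℤ, 0 ≤ x → x ≤ P → x + c + 1 ≠ 0 := by
  refine ⟨fun hc x hx _ => by omega, fun h => ?_⟩
  by_contra! hc
  exact h (-c - 1) (by omega) (by omega) (by ring)

theorem all_nonneg_iff_bounded_product_ne_zero (n : ℕ) (C D : Fin n → ℤ)
    (hD : ∀ i, 0 < D i) (hCD : ∀ i, |C i| ≤ D i) :
    (∀ i, 0 ≤ C i) ↔
      ∀ x : ℤ, 0 ≤ x → x ≤ ∏ i, D i → (∏ i, (x + C i + 1)) ≠ 0 := by
  have hC_le_prod (i : Fin n) : -C i ≤ ∏ j, D j + 1 := by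
    have := single_le_prod_of_one_le (fun j => Order.one_le_iff_pos.mpr (hD j)) i
    have := neg_le_of_abs_le (hCD i)
    omega
  simp only [prod_ne_zero_iff, mem_univ, true_implies]
  rw [forall_congr' fun i => nonneg_iff_forall_add_add_one_ne_zero (hC_le_prod i)]
  exact ⟨fun h x hx hxP i => h i x hx hxP, fun h i x hx hxP => h x hx hxP i⟩
end

section
/- Let σ₀, τ₀, …, σ_k, τ_k be real numbers with 0 ≤ τᵢ − σᵢ ≤ 1 for all i = 0, …, k, and let W be an integer with W ≥ 1 + max{τᵢ − τ_{i+1} : i = 0, …, k−1}. Then every interval [σᵢ, τᵢ] (0 ≤ i ≤ k) contains an integer if and only if for every integer t, ∏_{i=0}^k (t − σᵢ − iW)(t + 1 − τᵢ − iW) ≥ 0. -/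
/-!
The `i`-th factor, as a function of `t`, is negative exactly on the open interval
`(τᵢ + iW - 1, σᵢ + iW)`, which contains an integer iff `[σᵢ, τᵢ]` does not. The bound on `W`
makes the right endpoints `τᵢ + iW` increase by at least `1` at each step, so wherever one factor
is negative all the others are positive. Hence the product is nonnegative at every integer iff
every factor is.
-/

open Finset

section IntervalsContainingIntegers

variable {R : Type*} [CommRing R] [LinearOrder R] [IsStrictOrderedRing R]

theorem exists_intCast_mem_Icc_iff [FloorRing R] (σ τ : R) :
    (∃ m : ℤ, σ ≤ m ∧ (m : R) ≤ τ) ↔ ∀ t : ℤ, ¬(τ - 1 < t ∧ (t : R) < σ) := by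
  constructor
  · rintro ⟨m, hσm, hmτ⟩ t ⟨hτt, htσ⟩
    have hlt : t < m := by exact_mod_cast htσ.trans_le hσm
    have hgt : m < t + 1 := by exact_mod_cast (hmτ.trans_lt (sub_lt_iff_lt_add.mp hτt))
    omega
  · intro h
    refine ⟨⌊τ⌋, ?_, Int.floor_le τ⟩
    by_contra! hlt
    exact h ⌊τ⌋ ⟨Int.sub_one_lt_floor τ, hlt⟩

theorem sub_mul_add_one_sub_neg_iff {a b : R} (x : R) (hba : b ≤ a + 1) :
    (x - a) * (x + 1 - b) < 0 ↔ b - 1 < x ∧ x < a := by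
  constructor
  · intro h
    rcases mul_neg_iff.mp h with ⟨hxa, hxb⟩ | ⟨hxa, hxb⟩
    · linarith
    · constructor <;> linarith
  · rintro ⟨hbx, hxa⟩
    exact mul_neg_of_neg_of_pos (by linarith) (by linarith)

theorem exists_intCast_mem_Icc_iff_forall_mul_nonneg [FloorRing R] {σ τ : R} (hτσ : τ ≤ σ + 1)
    (n : ℤ) :
    (∃ m : ℤ, σ ≤ m ∧ (m : R) ≤ τ) ↔ ∀ t : ℤ, 0 ≤ (t - (σ + n)) * (t + 1 - (τ + n)) := by
  rw [exists_intCast_mem_Icc_iff, (Equiv.addRight n).forall_congr_left]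
  refine forall_congr' fun t => ?_
  rw [← not_lt, sub_mul_add_one_sub_neg_iff _ (by linarith)]
  simp only [Equiv.coe_addRight, Equiv.addRight_symm, Int.cast_add, Int.cast_neg]
  refine not_congr (and_congr ?_ ?_) <;> constructor <;> intro <;> linarith

theorem add_one_le_of_lt_of_forall_add_one_le_succ {c : ℕ → R} {k : ℕ}
    (hc : ∀ i < k, c i + 1 ≤ c (i + 1)) {i j : ℕ} (hij : i < j) (hjk : j ≤ k) :
    c i + 1 ≤ c j := by
  induction j, hij using Nat.le_induction with
  | base => exact hc i hjk
  | succ j hij ih =>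
    have := hc j hjk
    linarith [ih (by omega)]

variable {a b : ℕ → R} {k : ℕ}

theorem mul_pos_of_mul_neg_of_ne (hab : ∀ i ≤ k, a i ≤ b i ∧ b i ≤ a i + 1)
    (hb : ∀ i < k, b i + 1 ≤ b (i + 1)) {x : R} {i j : ℕ} (hi : i ≤ k) (hj : j ≤ k) (hij : i ≠ j)
    (hneg : (x - a i) * (x + 1 - b i) < 0) : 0 < (x - a j) * (x + 1 - b j) := by
  obtain ⟨hbx, hxa⟩ := (sub_mul_add_one_sub_neg_iff x (hab i hi).2).mp hneg
  have hai := (hab i hi).1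
  have haj := hab j hj
  rcases hij.lt_or_gt with hlt | hgt
  · have := add_one_le_of_lt_of_forall_add_one_le_succ hb hlt hj
    exact mul_pos_of_neg_of_neg (by linarith) (by linarith)
  · have := add_one_le_of_lt_of_forall_add_one_le_succ hb hgt hi
    exact mul_pos (by linarith) (by linarith)

theorem forall_mul_nonneg_iff_prod_nonneg (hab : ∀ i ≤ k, a i ≤ b i ∧ b i ≤ a i + 1)
    (hb : ∀ i < k, b i + 1 ≤ b (i + 1)) (x : R) :
    (∀ i ≤ k, 0 ≤ (x - a i) * (x + 1 - b i)) ↔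
      0 ≤ ∏ i ∈ range (k + 1), (x - a i) * (x + 1 - b i) := by
  refine ⟨fun h => prod_nonneg fun i hi => h i (mem_range_succ_iff.mp hi), ?_⟩
  intro hprod i hi
  by_contra! hneg
  have hmem : i ∈ range (k + 1) := mem_range_succ_iff.mpr hi
  have hrest : 0 < ∏ j ∈ (range (k + 1)).erase i, (x - a j) * (x + 1 - b j) :=
    prod_pos fun j hj => mul_pos_of_mul_neg_of_ne hab hb hi
      (mem_range_succ_iff.mp (mem_of_mem_erase hj)) (ne_of_mem_erase hj).symm hneg
  rw [← mul_prod_erase _ _ hmem] at hprod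
  exact hprod.not_gt (mul_neg_of_neg_of_pos hneg hrest)

end IntervalsContainingIntegers

theorem intervals_contain_integer_iff_product_nonneg (k : ℕ) (σ τ : ℕ → ℝ) (W : ℤ)
    (hστ : ∀ i ≤ k, 0 ≤ τ i - σ i ∧ τ i - σ i ≤ 1)
    (hW : ∀ i < k, 1 + (τ i - τ (i+1)) ≤ (W : ℝ)) :
    (∀ i ≤ k, ∃ m : ℤ, σ i ≤ (m : ℝ) ∧ (m : ℝ) ≤ τ i) ↔
      ∀ t : ℤ, 0 ≤ ∏ i ∈ Finset.range (k+1),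
        (((t : ℝ) - σ i - i * W) * ((t : ℝ) + 1 - τ i - i * W)) := by
  have hshift : ∀ i ≤ k, (∃ m : ℤ, σ i ≤ (m : ℝ) ∧ (m : ℝ) ≤ τ i) ↔
      ∀ t : ℤ, 0 ≤ ((t : ℝ) - (σ i + i * W)) * ((t : ℝ) + 1 - (τ i + i * W)) := fun i hi => by
    simpa using exists_intCast_mem_Icc_iff_forall_mul_nonneg (σ := σ i) (τ := τ i)
      (by linarith [hστ i hi]) (i * W)
  have hab : ∀ i ≤ k, σ i + i * W ≤ τ i + i * W ∧ τ i + i * W ≤ σ i + i * W + 1 := fun i hi => by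
    constructor <;> linarith [hστ i hi]
  have hb : ∀ i < k, τ i + i * W + 1 ≤ τ (i + 1) + ↑(i + 1) * W := fun i hi => by
    push_cast
    linarith [hW i hi]
  simp only [sub_sub, forall₂_congr hshift, ← forall_mul_nonneg_iff_prod_nonneg hab hb]
  exact ⟨fun h t i hi => h i hi t, fun h i hi t => h t i hi⟩
end

section
/- Let σ₀, τ₀, …, σ_k, τ_k be real numbers with 0 ≤ τᵢ − σᵢ ≤ 1 for all i, and let W be an integer with W ≥ 1 + max{τᵢ − τ_{i+1} : i = 0, …, k−1}. Then for any integer t with t ≤ τ₀ − 1 or t ≥ τ_k + kW, one has ∏_{i=0}^k (t − σᵢ − iW)(t + 1 − τᵢ − iW) ≥ 0. -/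
/-!
Put `aᵢ = τᵢ + i W`. The hypothesis on `W` says `aᵢ + 1 ≤ aᵢ₊₁`, so in particular `(aᵢ)` is
monotone, and the `i`-th factor is `(t - aᵢ + (τᵢ - σᵢ)) (t + 1 - aᵢ)` with `0 ≤ τᵢ - σᵢ ≤ 1`.
If `t ≤ a₀ - 1 ≤ aᵢ - 1`, both of its terms are `≤ 0`; if `t ≥ aₖ ≥ aᵢ`, both are `≥ 0`.
-/

theorem monotoneOn_nat_Iic_of_le_succ {α : Type*} [Preorder α] {f : ℕ → α} {k : ℕ}
    (hf : ∀ n < k, f n ≤ f (n + 1)) : MonotoneOn f (Set.Iic k) := by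
  intro a _ b hb hab
  induction b, hab using Nat.le_induction with
  | base => exact le_rfl
  | succ n _ ih =>
    rw [Set.mem_Iic] at hb
    exact (ih (Set.mem_Iic.mpr (by omega))).trans (hf n hb)

theorem monotoneOn_add_nat_mul_of_sub_succ_le {R : Type*} [CommRing R] [LinearOrder R]
    [IsStrictOrderedRing R] {τ : ℕ → R} {W : R} {k : ℕ} (hW : ∀ i < k, τ i - τ (i + 1) ≤ W) :
    MonotoneOn (fun i : ℕ ↦ τ i + i * W) (Set.Iic k) :=
  monotoneOn_nat_Iic_of_le_succ fun i hi ↦ by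
    push_cast
    linarith [hW i hi]

theorem mul_nonneg_of_le_sub_one_or_le {R : Type*} [CommRing R] [LinearOrder R]
    [IsStrictOrderedRing R] {x s τ c : R} (hs : s ≤ τ) (hτ : τ ≤ s + 1)
    (hx : x ≤ τ + c - 1 ∨ τ + c ≤ x) : 0 ≤ (x - s - c) * (x + 1 - τ - c) := by
  rcases hx with hx | hx
  · exact mul_nonneg_of_nonpos_of_nonpos (by linarith) (by linarith)
  · exact mul_nonneg (by linarith) (by linarith)

theorem product_nonneg_of_extreme_t (k : ℕ) (σ τ : ℕ → ℝ) (W : ℤ)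
    (hστ : ∀ i ≤ k, 0 ≤ τ i - σ i ∧ τ i - σ i ≤ 1)
    (hW : ∀ i < k, 1 + (τ i - τ (i+1)) ≤ (W : ℝ))
    (t : ℤ) (ht : (t : ℝ) ≤ τ 0 - 1 ∨ τ k + k * W ≤ (t : ℝ)) :
    0 ≤ ∏ i ∈ Finset.range (k+1),
      (((t : ℝ) - σ i - i * W) * ((t : ℝ) + 1 - τ i - i * W)) := by
  have hmono : MonotoneOn (fun i : ℕ ↦ τ i + i * (W : ℝ)) (Set.Iic k) :=
    monotoneOn_add_nat_mul_of_sub_succ_le fun i hi ↦ by linarith [hW i hi]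
  refine Finset.prod_nonneg fun i hi ↦ ?_
  have hik : i ≤ k := Nat.lt_succ_iff.mp (Finset.mem_range.mp hi)
  obtain ⟨hs, hτ⟩ := hστ i hik
  refine mul_nonneg_of_le_sub_one_or_le (by linarith) (by linarith) ?_
  rcases ht with ht | ht
  · have h0i : τ 0 ≤ τ i + i * W := by
      simpa using hmono (Set.mem_Iic.mpr (Nat.zero_le k)) (Set.mem_Iic.mpr hik) (Nat.zero_le i)
    exact Or.inl (by linarith)
  · exact Or.inr ((hmono (Set.mem_Iic.mpr hik) Set.self_mem_Iic hik).trans ht)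
end

section
/- Let B ≥ b > 0 be integers and let 0 < n₀ < n₁ < ⋯ < n_ν be integers. Suppose the integer c can be written as c = Σ_{i=0}^ν zᵢ B^{nᵢ} with each zᵢ ∈ {0, …, b−1}. Then: (a) 0 ≤ c ≤ b·B^{n_ν} − 1; (b) for each i = 1, …, ν, the interval [(c + 1 − b·B^{n_{i−1}})/B^{nᵢ}, c/B^{nᵢ}] contains an integer; and (c) c/B^{n₀} is an integer. -/
/-!
Split `c` after the `i`-th digit: the tail is a multiple of `B ^ nᵢ`, while the head
`Σ_{k<i} z_k B^{n_k}` lies in `[0, b B^{n_{i-1}} - 1]`. The head bound is proved by induction,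
using `b B^{n_j} ≤ B^{n_j + 1} ≤ B^{n_{j+1}}` to absorb the previous bound into one more digit.
-/

open Finset

lemma exists_int_mem_Icc_div_of_dvd_sub {c s L d : ℤ} (hd : 0 < d) (hdvd : d ∣ c - s)
    (hs0 : 0 ≤ s) (hsL : s ≤ L - 1) :
    ∃ m : ℤ, ((c : ℚ) + 1 - L) / d ≤ m ∧ (m : ℚ) ≤ c / d := by
  obtain ⟨m, hm⟩ := hdvd
  have hdQ : (0 : ℚ) < d := by exact_mod_cast hd
  refine ⟨m, ?_, ?_⟩
  · rw [div_le_iff₀ hdQ]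
    exact_mod_cast (by linarith : c + 1 - L ≤ m * d)
  · rw [le_div_iff₀ hdQ]
    exact_mod_cast (by linarith : m * d ≤ c)

lemma mul_pow_le_pow_of_lt {B b : ℤ} (hB : b ≤ B) (hB1 : 1 ≤ B) {k l : ℕ} (hkl : k < l) :
    b * B ^ k ≤ B ^ l :=
  calc b * B ^ k ≤ B * B ^ k := mul_le_mul_of_nonneg_right hB (by positivity)
    _ = B ^ (k + 1) := (pow_succ' B k).symm
    _ ≤ B ^ l := pow_le_pow_right₀ hB1 hkl

namespace DigitExpansion

variable {B b : ℤ} {n : ℕ → ℕ} {z : ℕ → ℤ}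

lemma sum_nonneg_of_digits_nonneg (hB : 0 ≤ B) (ν : ℕ) (hz : ∀ i ≤ ν, 0 ≤ z i) :
    0 ≤ ∑ i ∈ range (ν + 1), z i * B ^ n i :=
  sum_nonneg fun i hi =>
    mul_nonneg (hz i (Nat.lt_succ_iff.mp (mem_range.mp hi))) (pow_nonneg hB _)

lemma sum_le_of_digits_le (hB : b ≤ B) (hB1 : 1 ≤ B) (ν : ℕ)
    (hn : StrictMonoOn n (Set.Iic ν)) (hz : ∀ i ≤ ν, z i ≤ b - 1) :
    ∑ i ∈ range (ν + 1), z i * B ^ n i ≤ b * B ^ n ν - 1 := by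
  induction ν with
  | zero =>
    have hpow : 1 ≤ B ^ n 0 := one_le_pow₀ hB1
    have hdigit := mul_le_mul_of_nonneg_right (hz 0 le_rfl) (by positivity : 0 ≤ B ^ n 0)
    rw [zero_add, sum_range_one]
    linarith
  | succ ν ih =>
    have head :=
      ih (hn.mono (Set.Iic_subset_Iic.mpr ν.le_succ)) fun i hi => hz i (hi.trans ν.le_succ)
    have hstep : b * B ^ n ν ≤ B ^ n (ν + 1) :=
      mul_pow_le_pow_of_lt hB hB1
        (hn (Set.mem_Iic.mpr ν.le_succ) (Set.mem_Iic.mpr le_rfl) ν.lt_succ_self)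
    have hdigit :=
      mul_le_mul_of_nonneg_right (hz (ν + 1) le_rfl) (by positivity : 0 ≤ B ^ n (ν + 1))
    rw [sum_range_succ]
    linarith

lemma pow_dvd_sum_sub_sum_range (ν : ℕ) (hn : MonotoneOn n (Set.Iic ν)) {i : ℕ}
    (hi : i ≤ ν + 1) :
    B ^ n i ∣ ∑ k ∈ range (ν + 1), z k * B ^ n k - ∑ k ∈ range i, z k * B ^ n k := by
  rw [← sum_range_add_sum_Ico _ hi, add_sub_cancel_left]
  refine dvd_sum fun k hk => dvd_mul_of_dvd_right (pow_dvd_pow B ?_) _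
  obtain ⟨hik, hkν⟩ := mem_Ico.mp hk
  exact hn (Set.mem_Iic.mpr (by omega)) (Set.mem_Iic.mpr (by omega)) hik

end DigitExpansion

open DigitExpansion in
theorem digit_representation_intervals_general (B b : ℤ) (hb : 0 < b) (hB : b ≤ B)
    (ν : ℕ) (n : ℕ → ℕ) (hn : ∀ i < ν, n i < n (i+1))
    (z : ℕ → ℤ) (hz : ∀ i ≤ ν, 0 ≤ z i ∧ z i ≤ b - 1)
    (c : ℤ) (hc : c = ∑ i ∈ Finset.range (ν+1), z i * B ^ n i) :
    (0 ≤ c ∧ c ≤ b * B ^ n ν - 1) ∧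
    (∀ i, 1 ≤ i → i ≤ ν → ∃ m : ℤ,
      ((c : ℚ) + 1 - b * (B : ℚ) ^ n (i-1)) / (B : ℚ) ^ n i ≤ (m : ℚ) ∧
      (m : ℚ) ≤ (c : ℚ) / (B : ℚ) ^ n i) ∧
    (∃ m : ℤ, (c : ℚ) / (B : ℚ) ^ n 0 = (m : ℚ)) := by
  have hB1 : 1 ≤ B := hb.trans_le hB
  have hmono : StrictMonoOn n (Set.Iic ν) := strictMonoOn_Iic_of_lt_succ hn
  refine ⟨hc ▸ ⟨sum_nonneg_of_digits_nonneg (by omega) ν fun i hi => (hz i hi).1,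
    sum_le_of_digits_le hB hB1 ν hmono fun i hi => (hz i hi).2⟩, fun i hi1 hiν => ?_, ?_⟩
  · obtain ⟨j, rfl⟩ := Nat.exists_eq_add_of_le' hi1
    have hdvd := pow_dvd_sum_sub_sum_range (B := B) (z := z) ν hmono.monotoneOn (i := j + 1)
      (by omega)
    rw [← hc] at hdvd
    simpa using exists_int_mem_Icc_div_of_dvd_sub (by positivity) hdvd
      (sum_nonneg_of_digits_nonneg (by omega) j fun k hk => (hz k (by omega)).1)
      (sum_le_of_digits_le hB hB1 j (hmono.mono (Set.Iic_subset_Iic.mpr (by omega)))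
        fun k hk => (hz k (by omega)).2)
  · have hdvd := pow_dvd_sum_sub_sum_range (B := B) (z := z) ν hmono.monotoneOn (i := 0)
      (by omega)
    rw [sum_range_zero, sub_zero, ← hc] at hdvd
    exact ⟨c / B ^ n 0, by rw [Int.cast_div hdvd (by positivity), Int.cast_pow]⟩

theorem digit_representation_intervals (B b : ℤ) (hb : 0 < b) (hB : b ≤ B)
    (ν : ℕ) (n : ℕ → ℕ) (hn0 : 0 < n 0) (hn : ∀ i < ν, n i < n (i+1))
    (z : ℕ → ℤ) (hz : ∀ i ≤ ν, 0 ≤ z i ∧ z i ≤ b - 1)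
    (c : ℤ) (hc : c = ∑ i ∈ Finset.range (ν+1), z i * B ^ n i) :
    (0 ≤ c ∧ c ≤ b * B ^ n ν - 1) ∧
    (∀ i, 1 ≤ i → i ≤ ν → ∃ m : ℤ,
      ((c : ℚ) + 1 - b * (B : ℚ) ^ n (i-1)) / (B : ℚ) ^ n i ≤ (m : ℚ) ∧
      (m : ℚ) ≤ (c : ℚ) / (B : ℚ) ^ n i) ∧
    (∃ m : ℤ, (c : ℚ) / (B : ℚ) ^ n 0 = (m : ℚ)) :=
  digit_representation_intervals_general B b hb hB ν n hn z hz c hc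
end

section
/- Let B ≥ b > 0 and 0 < n₀ < ⋯ < n_ν be integers, and let c be an integer. Then c has the form Σ_{i=0}^ν zᵢ B^{nᵢ} with all zᵢ ∈ {0, …, b−1} if and only if each of the following intervals contains an integer: [σ₀, τ₀] where σ₀ = τ₀ = c/B^{n₀}; [σᵢ, τᵢ] for i = 1, …, ν where σᵢ = (c + 1 − b·B^{n_{i−1}})/B^{nᵢ} and τᵢ = c/B^{nᵢ}; and [σ_{ν+1}, τ_{ν+1}] where σ_{ν+1} = (c + 1 − b·B^{n_ν})/((b² + c²)·B^{n_ν}) and τ_{ν+1} = c/((b² + c²)·B^{n_ν}). -/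
/-!
Write `M i = B ^ n i`, so that `M i ∣ M (i + 1)` and `b * M i ≤ M (i + 1)`. A sum of `ν + 1`
digits lies in `[0, b * M ν) ⊆ [0, M (ν + 1))`, so adding a top digit `q` gives a number whose
residue and quotient mod `M (ν + 1)` are the old sum and `q`. Induction on `ν` then shows that `c`
is a digit sum iff `M 0 ∣ c`, `c % M i < b * M (i - 1)` for `1 ≤ i ≤ ν`, and `0 ≤ c < b * M ν`.
Each interval condition is one of these: `[(c + 1 - e) / d, c / d]` contains an integer iff
`c % d < e`, and for `d = (b² + c²) M ν` the modulus exceeds `|c|` by enough that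
`c % d < b * M ν` says exactly `0 ≤ c < b * M ν`.
-/

open Finset

def IsDigitSum (b : ℤ) (M : ℕ → ℤ) (ν : ℕ) (c : ℤ) : Prop :=
  ∃ z : ℕ → ℤ, (∀ i ≤ ν, 0 ≤ z i ∧ z i ≤ b - 1) ∧ c = ∑ i ∈ range (ν + 1), z i * M i

def DigitConditions (b : ℤ) (M : ℕ → ℤ) (ν : ℕ) (c : ℤ) : Prop :=
  M 0 ∣ c ∧ (∀ i, 1 ≤ i → i ≤ ν → c % M i < b * M (i - 1)) ∧ 0 ≤ c ∧ c < b * M ν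

theorem dvd_of_le_of_forall_dvd_succ {M : ℕ → ℤ} {ν : ℕ} (h : ∀ i < ν, M i ∣ M (i + 1))
    {i j : ℕ} (hij : i ≤ j) (hj : j ≤ ν) : M i ∣ M j := by
  induction j, hij using Nat.le_induction with
  | base => rfl
  | succ j _ ih => exact (ih (by omega)).trans (h j (by omega))

theorem ediv_mem_digits_iff {b c N : ℤ} (hN : 0 < N) :
    (0 ≤ c / N ∧ c / N ≤ b - 1) ↔ (0 ≤ c ∧ c < b * N) := by
  rw [Int.ediv_nonneg_iff_of_pos hN, Int.le_sub_one_iff, Int.ediv_lt_iff_lt_mul hN]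

theorem exists_add_mul_eq_iff_emod_ediv {P Q : ℤ → Prop} {N c : ℤ} (hN : 0 < N)
    (hP : ∀ r, P r → 0 ≤ r ∧ r < N) :
    (∃ r q, P r ∧ Q q ∧ c = r + q * N) ↔ P (c % N) ∧ Q (c / N) := by
  constructor
  · rintro ⟨r, q, hr, hq, rfl⟩
    obtain ⟨hdiv, hmod⟩ :=
      (Int.ediv_emod_unique (a := r + q * N) (q := q) (r := r) hN).2 ⟨by ring, hP r hr⟩
    rw [hdiv, hmod]
    exact ⟨hr, hq⟩
  · rintro ⟨hr, hq⟩
    exact ⟨_, _, hr, hq, (Int.emod_add_ediv_mul c N).symm⟩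

theorem isDigitSum_succ_iff {b c : ℤ} {M : ℕ → ℤ} {ν : ℕ} :
    IsDigitSum b M (ν + 1) c ↔
      ∃ r q, IsDigitSum b M ν r ∧ (0 ≤ q ∧ q ≤ b - 1) ∧ c = r + q * M (ν + 1) := by
  constructor
  · rintro ⟨z, hz, rfl⟩
    exact ⟨_, z (ν + 1), ⟨z, fun i hi => hz i (by omega), rfl⟩, hz _ le_rfl, sum_range_succ _ _⟩
  · rintro ⟨r, q, ⟨z, hz, rfl⟩, hq, rfl⟩
    refine ⟨Function.update z (ν + 1) q, fun i hi => ?_, ?_⟩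
    · rcases hi.lt_or_eq with hi | rfl
      · simpa [Function.update, hi.ne] using hz i (by omega)
      · simpa using hq
    · rw [sum_range_succ _ (ν + 1), Function.update_self]
      congr 1
      refine sum_congr rfl fun i hi => ?_
      rw [Function.update_of_ne (by simp at hi; omega)]

theorem isDigitSum_zero_iff {b c : ℤ} {M : ℕ → ℤ} (hM : 0 < M 0) :
    IsDigitSum b M 0 c ↔ DigitConditions b M 0 c := by
  constructor
  · rintro ⟨z, hz, rfl⟩
    obtain ⟨h0, h1⟩ := hz 0 le_rfl
    simp only [DigitConditions, zero_add, range_one, sum_singleton]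
    exact ⟨dvd_mul_left _ _, by omega, mul_nonneg h0 hM.le, by nlinarith⟩
  · rintro ⟨hdvd, -, hc⟩
    refine ⟨fun _ => c / M 0, fun _ _ => (ediv_mem_digits_iff hM).2 hc, ?_⟩
    simp [Int.ediv_mul_cancel hdvd]

theorem digitConditions_succ_iff {b c : ℤ} {M : ℕ → ℤ} {ν : ℕ} (hN : 0 < M (ν + 1))
    (hdvd : ∀ i ≤ ν, M i ∣ M (ν + 1)) :
    DigitConditions b M (ν + 1) c ↔
      DigitConditions b M ν (c % M (ν + 1)) ∧ (0 ≤ c / M (ν + 1) ∧ c / M (ν + 1) ≤ b - 1) := by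
  have hmod : ∀ i ≤ ν, c % M (ν + 1) % M i = c % M i := fun i hi =>
    Int.emod_emod_of_dvd c (hdvd i hi)
  rw [ediv_mem_digits_iff hN]
  simp only [DigitConditions, Int.dvd_iff_emod_eq_zero, hmod 0 (Nat.zero_le _)]
  constructor
  · rintro ⟨h0, hmid, hc⟩
    refine ⟨⟨h0, fun i h1 hi => ?_, Int.emod_nonneg _ hN.ne', ?_⟩, hc⟩
    · rw [hmod i hi]; exact hmid i h1 (by omega)
    · simpa using hmid (ν + 1) (by omega) le_rfl
  · rintro ⟨⟨h0, hmid, -, hlast⟩, hc⟩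
    refine ⟨h0, fun i h1 hi => ?_, hc⟩
    rcases hi.lt_or_eq with hi | rfl
    · rw [← hmod i (by omega)]; exact hmid i h1 (by omega)
    · simpa using hlast

theorem isDigitSum_iff_digitConditions {b : ℤ} {M : ℕ → ℤ} {ν : ℕ} (hM : ∀ i, 0 < M i)
    (hM_succ : ∀ i < ν, M i ∣ M (i + 1) ∧ b * M i ≤ M (i + 1)) (c : ℤ) :
    IsDigitSum b M ν c ↔ DigitConditions b M ν c := by
  induction ν generalizing c with
  | zero => exact isDigitSum_zero_iff (hM 0)
  | succ ν ih =>
    have ih := ih (fun i hi => hM_succ i (by omega))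
    have hdvd (i : ℕ) (hi : i ≤ ν) : M i ∣ M (ν + 1) :=
      dvd_of_le_of_forall_dvd_succ (fun j hj => (hM_succ j hj).1) (by omega) le_rfl
    rw [isDigitSum_succ_iff, digitConditions_succ_iff (hM _) hdvd, ← ih]
    refine exists_add_mul_eq_iff_emod_ediv (hM _) fun r hr => ?_
    obtain ⟨-, -, hr0, hrb⟩ := (ih r).1 hr
    exact ⟨hr0, hrb.trans_le (hM_succ ν (Nat.lt_succ_self ν)).2⟩

theorem emod_lt_iff_of_lt_of_le_add {c d e : ℤ} (hd : 0 < d) (hcd : c < d) (hed : e ≤ c + d) :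
    c % d < e ↔ 0 ≤ c ∧ c < e := by
  by_cases hc : 0 ≤ c
  · simp [Int.emod_eq_of_lt hc hcd, hc]
  · have hq : c / d < 0 := Int.ediv_neg_of_neg_of_pos (by omega) hd
    have := Int.emod_add_mul_ediv c d
    simp only [hc, false_and, iff_false, not_lt]
    nlinarith

theorem emod_sq_add_sq_mul_lt_iff {b c E : ℤ} (hb : 0 < b) (hE : 0 < E) :
    c % ((b ^ 2 + c ^ 2) * E) < b * E ↔ 0 ≤ c ∧ c < b * E := by
  have hD : b ^ 2 + c ^ 2 ≤ (b ^ 2 + c ^ 2) * E := le_mul_of_one_le_right (by positivity) hE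
  have hb2 : b * E ≤ b ^ 2 * E := by gcongr; exact Int.le_self_sq b
  have hc_neg : -c ≤ c ^ 2 := by simpa using Int.le_self_sq (-c)
  have hc_pos : c ≤ c ^ 2 := Int.le_self_sq c
  refine emod_lt_iff_of_lt_of_le_add (by positivity) (by nlinarith) ?_
  nlinarith

theorem exists_intCast_eq_div_iff_dvd {c d : ℤ} (hd : d ≠ 0) :
    (∃ m : ℤ, (c : ℚ) / d = m) ↔ d ∣ c := by
  have hdq : (d : ℚ) ≠ 0 := by exact_mod_cast hd
  constructor
  · rintro ⟨m, hm⟩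
    rw [div_eq_iff hdq] at hm
    exact ⟨m, by rw [mul_comm]; exact_mod_cast hm⟩
  · rintro ⟨m, rfl⟩
    exact ⟨m, by push_cast; field_simp⟩

theorem exists_intCast_mem_Icc_div_iff_emod_lt {c e d : ℤ} (hd : 0 < d) :
    (∃ m : ℤ, ((c : ℚ) + 1 - e) / d ≤ m ∧ (m : ℚ) ≤ c / d) ↔ c % d < e := by
  have hdq : (0 : ℚ) < d := by exact_mod_cast hd
  simp_rw [div_le_iff₀ hdq, le_div_iff₀ hdq]
  norm_cast
  have hc := Int.emod_add_ediv_mul c d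
  constructor
  · rintro ⟨m, h1, h2⟩
    have : m * d ≤ c / d * d :=
      mul_le_mul_of_nonneg_right ((Int.le_ediv_iff_mul_le hd).2 h2) hd.le
    omega
  · exact fun h => ⟨c / d, by omega, by have := Int.emod_nonneg c hd.ne'; omega⟩

theorem digit_representation_iff_intervals_general (B b : ℤ) (hb : 0 < b) (hB : b ≤ B)
    (ν : ℕ) (n : ℕ → ℕ) (hn : ∀ i < ν, n i < n (i+1))
    (c : ℤ) :
    (∃ z : ℕ → ℤ, (∀ i ≤ ν, 0 ≤ z i ∧ z i ≤ b - 1) ∧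
        c = ∑ i ∈ Finset.range (ν+1), z i * B ^ n i) ↔
      ((∃ m : ℤ, (c : ℚ) / (B : ℚ) ^ n 0 = (m : ℚ)) ∧
       (∀ i, 1 ≤ i → i ≤ ν → ∃ m : ℤ,
          ((c : ℚ) + 1 - b * (B : ℚ) ^ n (i-1)) / (B : ℚ) ^ n i ≤ (m : ℚ) ∧
          (m : ℚ) ≤ (c : ℚ) / (B : ℚ) ^ n i) ∧
       (∃ m : ℤ,
          ((c : ℚ) + 1 - b * (B : ℚ) ^ n ν) / (((b : ℚ)^2 + (c : ℚ)^2) * (B : ℚ) ^ n ν) ≤ (m : ℚ) ∧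
          (m : ℚ) ≤ (c : ℚ) / (((b : ℚ)^2 + (c : ℚ)^2) * (B : ℚ) ^ n ν))) := by
  have hpow (k : ℕ) : 0 < B ^ k := pow_pos (hb.trans_le hB) k
  have hsucc (i : ℕ) (hi : i < ν) : B ^ n i ∣ B ^ n (i + 1) ∧ b * B ^ n i ≤ B ^ n (i + 1) :=
    ⟨pow_dvd_pow B (hn i hi).le, calc
      b * B ^ n i ≤ B ^ (n i + 1) := by rw [pow_succ']; gcongr; exact (hpow _).le
      _ ≤ B ^ n (i + 1) := pow_le_pow_right₀ (by omega) (hn i hi)⟩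
  have hD : 0 < (b ^ 2 + c ^ 2) * B ^ n ν := mul_pos (by positivity) (hpow _)
  refine (isDigitSum_iff_digitConditions (M := (B ^ n ·)) (fun i => hpow (n i)) hsucc c).trans ?_
  simp only [DigitConditions]
  rw [← emod_sq_add_sq_mul_lt_iff hb (hpow _), ← exists_intCast_mem_Icc_div_iff_emod_lt hD,
    ← exists_intCast_eq_div_iff_dvd (hpow _).ne']
  simp only [← exists_intCast_mem_Icc_div_iff_emod_lt (hpow _)]
  push_cast
  rfl

theorem digit_representation_iff_intervals (B b : ℤ) (hb : 0 < b) (hB : b ≤ B)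
    (ν : ℕ) (n : ℕ → ℕ) (hn0 : 0 < n 0) (hn : ∀ i < ν, n i < n (i+1))
    (c : ℤ) :
    (∃ z : ℕ → ℤ, (∀ i ≤ ν, 0 ≤ z i ∧ z i ≤ b - 1) ∧
        c = ∑ i ∈ Finset.range (ν+1), z i * B ^ n i) ↔
      ((∃ m : ℤ, (c : ℚ) / (B : ℚ) ^ n 0 = (m : ℚ)) ∧
       (∀ i, 1 ≤ i → i ≤ ν → ∃ m : ℤ,
          ((c : ℚ) + 1 - b * (B : ℚ) ^ n (i-1)) / (B : ℚ) ^ n i ≤ (m : ℚ) ∧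
          (m : ℚ) ≤ (c : ℚ) / (B : ℚ) ^ n i) ∧
       (∃ m : ℤ,
          ((c : ℚ) + 1 - b * (B : ℚ) ^ n ν) / (((b : ℚ)^2 + (c : ℚ)^2) * (B : ℚ) ^ n ν) ≤ (m : ℚ) ∧
          (m : ℚ) ≤ (c : ℚ) / (((b : ℚ)^2 + (c : ℚ)^2) * (B : ℚ) ^ n ν))) :=
  digit_representation_iff_intervals_general B b hb hB ν n hn c
end

section
/- Let B ≥ b > 0 and 0 < n₀ < ⋯ < n_ν be integers, and let c be an integer such that: c/B^{n₀} is an integer; for each i = 1, …, ν there is an integer xᵢ with (c + 1 − b·B^{n_{i−1}})/B^{nᵢ} ≤ xᵢ ≤ c/B^{nᵢ}; and there is an integer x_{ν+1} with (c + 1 − b·B^{n_ν})/((b²+c²)·B^{n_ν}) ≤ x_{ν+1} ≤ c/((b²+c²)·B^{n_ν}). Then 0 ≤ c < b·B^{n_ν}, and c = Σ_{i=0}^ν zᵢ B^{nᵢ} for some z₀, …, z_ν ∈ {0, …, b−1}. -/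
/-!
Both endpoints of the last interval, scaled by `D = (b² + c²) B^{n_ν}`, lie strictly between `-D`
and `D`, so the only admissible multiple of `D` is `0`, which gives `0 ≤ c < b B^{n_ν}`. The
middle intervals say exactly that `c mod B^{n_i} < b B^{n_{i-1}}`, so the mixed-radix digits
`(c mod B^{n_{i+1}}) / B^{n_i}` of `c` lie in `{0, …, b - 1}`, and they telescope back to `c`
because `B^{n_0} ∣ c`.
-/

open Finset

namespace Int

theorem mem_Icc_div_iff_mul_mem_Icc {a c d x : ℤ} (hd : 0 < d) :
    ((a : ℚ) / d ≤ x ∧ (x : ℚ) ≤ c / d) ↔ (a ≤ x * d ∧ x * d ≤ c) := by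
  have hdQ : (0 : ℚ) < d := by exact_mod_cast hd
  rw [div_le_iff₀ hdQ, le_div_iff₀ hdQ]
  norm_cast

theorem eq_zero_of_mul_mem_Icc {a c d x : ℤ} (hd : 0 < d) (ha : -d < a) (hc : c < d)
    (hlo : a ≤ x * d) (hhi : x * d ≤ c) : x = 0 := by
  have hpos : -1 < x := by nlinarith
  have hneg : x < 1 := by nlinarith
  omega

theorem emod_lt_of_mul_mem_Icc {c d e x : ℤ} (hd : 0 < d)
    (hlo : c + 1 - e ≤ x * d) (hhi : x * d ≤ c) : c % d < e := by
  have hx : x ≤ c / d := Int.le_ediv_of_mul_le hd hhi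
  rw [emod_def]
  nlinarith

theorem sum_emod_ediv_mul (c : ℤ) (m : ℕ → ℤ) (k : ℕ) (hm : ∀ i < k, m i ∣ m (i + 1)) :
    ∑ i ∈ Finset.range k, c % m (i + 1) / m i * m i = c % m k - c % m 0 := by
  rw [← Finset.sum_range_sub (fun i => c % m i)]
  refine sum_congr rfl fun i hi => ?_
  rw [← emod_emod_of_dvd c (hm i (mem_range.1 hi)), emod_def (c % m (i + 1)) (m i)]
  ring

theorem exists_digits_of_emod_lt {b c : ℤ} {m : ℕ → ℤ} {k : ℕ} (hm : ∀ i ≤ k, 0 < m i)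
    (hdvd : ∀ i < k, m i ∣ m (i + 1)) (h0 : m 0 ∣ c) (hc : 0 ≤ c)
    (hrem : ∀ i < k, c % m (i + 1) < b * m i) (hlt : c < b * m k) :
    ∃ z : ℕ → ℤ, (∀ i ≤ k, 0 ≤ z i ∧ z i ≤ b - 1) ∧
      c = ∑ i ∈ Finset.range (k + 1), z i * m i := by
  -- Extending `m` by `0` makes `c % m' (k + 1) = c`, so all digits have the same shape.
  set m' : ℕ → ℤ := fun i => if i ≤ k then m i else 0
  have hm'_of_le : ∀ i ≤ k, m' i = m i := fun i hi => if_pos hi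
  have hm'_succ : m' (k + 1) = 0 := if_neg (by omega)
  have hrem' : ∀ i ≤ k, 0 ≤ c % m' (i + 1) ∧ c % m' (i + 1) < b * m i := by
    intro i hi
    rcases hi.lt_or_eq with hi | rfl
    · rw [hm'_of_le (i + 1) hi]
      exact ⟨emod_nonneg c (hm (i + 1) hi).ne', hrem i hi⟩
    · rw [hm'_succ, emod_zero]
      exact ⟨hc, hlt⟩
  refine ⟨fun i => c % m' (i + 1) / m' i, fun i hi => ?_, ?_⟩
  · obtain ⟨hr0, hrb⟩ := hrem' i hi
    simp only [hm'_of_le i hi]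
    have := (Int.ediv_lt_iff_lt_mul (hm i hi)).2 hrb
    exact ⟨ediv_nonneg hr0 (hm i hi).le, by omega⟩
  · have hdvd' : ∀ i < k + 1, m' i ∣ m' (i + 1) := by
      intro i hi
      rcases (Nat.lt_succ_iff.1 hi).lt_or_eq with hi | rfl
      · rw [hm'_of_le i hi.le, hm'_of_le (i + 1) hi]
        exact hdvd i hi
      · rw [hm'_succ]
        exact dvd_zero _
    have := sum_emod_ediv_mul c m' (k + 1) hdvd'
    rw [hm'_succ, emod_zero, hm'_of_le 0 (Nat.zero_le k), emod_eq_zero_of_dvd h0, sub_zero] at this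
    refine this.symm.trans (sum_congr rfl fun i hi => ?_)
    simp only [hm'_of_le i (Nat.lt_succ_iff.1 (mem_range.1 hi))]

end Int

theorem sq_add_sq_mul_bounds {b c N : ℤ} (hb : 0 < b) (hN : 0 < N) :
    -((b ^ 2 + c ^ 2) * N) < c + 1 - b * N ∧ c < (b ^ 2 + c ^ 2) * N := by
  constructor <;> nlinarith [sq_nonneg (c + 1), sq_nonneg (c - 1), mul_pos hb hN,
    mul_le_mul_of_nonneg_right (show b ≤ b ^ 2 by nlinarith) hN.le,
    mul_le_mul_of_nonneg_left (show 1 ≤ N from hN) (sq_nonneg c)]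

theorem digit_representation_of_intervals_general (B b : ℤ) (hb : 0 < b) (hB : b ≤ B)
    (ν : ℕ) (n : ℕ → ℕ) (hn : ∀ i < ν, n i < n (i+1))
    (c : ℤ)
    (h0 : ∃ m : ℤ, (c : ℚ) / (B : ℚ) ^ n 0 = (m : ℚ))
    (hmid : ∀ i, 1 ≤ i → i ≤ ν → ∃ x : ℤ,
        ((c : ℚ) + 1 - b * (B : ℚ) ^ n (i-1)) / (B : ℚ) ^ n i ≤ (x : ℚ) ∧
        (x : ℚ) ≤ (c : ℚ) / (B : ℚ) ^ n i)
    (hlast : ∃ x : ℤ,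
        ((c : ℚ) + 1 - b * (B : ℚ) ^ n ν) / (((b : ℚ)^2 + (c : ℚ)^2) * (B : ℚ) ^ n ν) ≤ (x : ℚ) ∧
        (x : ℚ) ≤ (c : ℚ) / (((b : ℚ)^2 + (c : ℚ)^2) * (B : ℚ) ^ n ν)) :
    (0 ≤ c ∧ c < b * B ^ n ν) ∧
    ∃ z : ℕ → ℤ, (∀ i ≤ ν, 0 ≤ z i ∧ z i ≤ b - 1) ∧
      c = ∑ i ∈ Finset.range (ν+1), z i * B ^ n i := by
  have hpow : ∀ i, 0 < B ^ n i := fun i => pow_pos (hb.trans_le hB) _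
  have hrange : 0 ≤ c ∧ c < b * B ^ n ν := by
    obtain ⟨x, hx⟩ := hlast
    have hD : 0 < (b ^ 2 + c ^ 2) * B ^ n ν := by have := hpow ν; positivity
    obtain ⟨hlo, hhi⟩ := (Int.mem_Icc_div_iff_mul_mem_Icc (a := c + 1 - b * B ^ n ν) (c := c) hD).1
      (by push_cast; exact hx)
    obtain ⟨ha, hc⟩ := sq_add_sq_mul_bounds (c := c) hb (hpow ν)
    obtain rfl := Int.eq_zero_of_mul_mem_Icc hD ha hc hlo hhi
    omega
  have hdvd : B ^ n 0 ∣ c := by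
    obtain ⟨m, hm⟩ := h0
    rw [div_eq_iff (by exact_mod_cast (hpow 0).ne')] at hm
    exact ⟨m, by rw [mul_comm]; exact_mod_cast hm⟩
  have hrem : ∀ i < ν, c % B ^ n (i + 1) < b * B ^ n i := by
    intro i hi
    obtain ⟨x, hx⟩ := hmid (i + 1) (by omega) hi
    obtain ⟨hlo, hhi⟩ := (Int.mem_Icc_div_iff_mul_mem_Icc (a := c + 1 - b * B ^ n i) (c := c)
      (hpow (i + 1))).1 (by push_cast; exact hx)
    exact Int.emod_lt_of_mul_mem_Icc (hpow (i + 1)) hlo hhi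
  exact ⟨hrange, Int.exists_digits_of_emod_lt (fun i _ => hpow i)
    (fun i hi => pow_dvd_pow B (hn i hi).le) hdvd hrange.1 hrem hrange.2⟩

theorem digit_representation_of_intervals (B b : ℤ) (hb : 0 < b) (hB : b ≤ B)
    (ν : ℕ) (n : ℕ → ℕ) (hn0 : 0 < n 0) (hn : ∀ i < ν, n i < n (i+1))
    (c : ℤ)
    (h0 : ∃ m : ℤ, (c : ℚ) / (B : ℚ) ^ n 0 = (m : ℚ))
    (hmid : ∀ i, 1 ≤ i → i ≤ ν → ∃ x : ℤ,
        ((c : ℚ) + 1 - b * (B : ℚ) ^ n (i-1)) / (B : ℚ) ^ n i ≤ (x : ℚ) ∧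
        (x : ℚ) ≤ (c : ℚ) / (B : ℚ) ^ n i)
    (hlast : ∃ x : ℤ,
        ((c : ℚ) + 1 - b * (B : ℚ) ^ n ν) / (((b : ℚ)^2 + (c : ℚ)^2) * (B : ℚ) ^ n ν) ≤ (x : ℚ) ∧
        (x : ℚ) ≤ (c : ℚ) / (((b : ℚ)^2 + (c : ℚ)^2) * (B : ℚ) ^ n ν)) :
    (0 ≤ c ∧ c < b * B ^ n ν) ∧
    ∃ z : ℕ → ℤ, (∀ i ≤ ν, 0 ≤ z i ∧ z i ≤ b - 1) ∧
      c = ∑ i ∈ Finset.range (ν+1), z i * B ^ n i :=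
  digit_representation_of_intervals_general B b hb hB ν n hn c h0 hmid hlast
end

section
/- Let k and m be integers with k > 0, k even, and m ≡ 3 (mod 4), and let b be an integer. Then |m − b^k| = min over all integers x of |m − x^k| if and only if |m − b^k| < |m − (b+1)^k| and |m − b^k| < |m − (b−1)^k|. -/
/-!
For even `k`, `x ↦ x ^ k` depends only on `|x|` and is monotone in it, while `y ↦ |m - y|` is
convex, hence bounded on a segment by its values at the endpoints. So if `b` beats both neighbours,
any `x` with `|x| ≠ |b|` is compared with the neighbour `s` of `b` for which `|s|` lies between
`|b|` and `|x|`: then `s ^ k` lies between `b ^ k` and `x ^ k`, which forces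
`|m - b ^ k| < |m - s ^ k| ≤ |m - x ^ k|`. Conversely a global minimum is strict against its
neighbours, since `c ^ k + (c + 1) ^ k` is odd and therefore never equals `2 * m`.
-/

open Set

lemma abs_sub_le_max_of_mem_uIcc {G : Type*} [AddCommGroup G] [LinearOrder G]
    [IsOrderedAddMonoid G] {m y y' z : G} (h : y' ∈ uIcc y z) :
    |m - y'| ≤ max |m - y| |m - z| := by
  rcases mem_uIcc.1 h with ⟨hy, hz⟩ | ⟨hz, hy⟩
  · exact (abs_le_max_abs_abs (sub_le_sub_left hz m) (sub_le_sub_left hy m)).trans_eq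
      (max_comm _ _)
  · exact abs_le_max_abs_abs (sub_le_sub_left hy m) (sub_le_sub_left hz m)

lemma abs_sub_lt_of_lt_of_mem_uIcc {G : Type*} [AddCommGroup G] [LinearOrder G]
    [IsOrderedAddMonoid G] {m y y' z : G} (h : y' ∈ uIcc y z) (hlt : |m - y| < |m - y'|) :
    |m - y| < |m - z| :=
  (lt_max_iff.1 (hlt.trans_le (abs_sub_le_max_of_mem_uIcc h))).resolve_left (lt_irrefl _)

lemma Int.odd_pow_add_succ_pow (c : ℤ) {k : ℕ} (hk : k ≠ 0) : Odd (c ^ k + (c + 1) ^ k) := by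
  simp [Int.odd_add, Int.even_pow' hk, Int.odd_pow' hk, parity_simps]

lemma Int.abs_sub_pow_ne_abs_sub_succ_pow (m c : ℤ) {k : ℕ} (hk : k ≠ 0) :
    |m - c ^ k| ≠ |m - (c + 1) ^ k| := by
  intro h
  rcases abs_eq_abs.1 h with hsame | hopp
  · have hpow : c ^ k = (c + 1) ^ k := by linarith
    rcases (pow_eq_pow_iff_of_ne_zero hk).1 hpow with hc | ⟨hc, -⟩ <;> omega
  · obtain ⟨t, ht⟩ := Int.odd_pow_add_succ_pow c hk
    omega

lemma Int.exists_neighbour_abs_mem_uIcc {b x : ℤ} (h : |x| ≠ |b|) :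
    ∃ s, (s = b + 1 ∨ s = b - 1) ∧ |s| ∈ uIcc |b| |x| := by
  simp only [mem_uIcc, abs_eq_max_neg] at h ⊢
  rcases le_or_gt 0 b with hb | hb <;> rcases lt_or_gt_of_ne h with hxb | hxb
  exacts [⟨b - 1, .inr rfl, by omega⟩, ⟨b + 1, .inl rfl, by omega⟩,
    ⟨b + 1, .inl rfl, by omega⟩, ⟨b - 1, .inr rfl, by omega⟩]

lemma Even.pow_mem_uIcc_of_abs_mem_uIcc {R : Type*} [Ring R] [LinearOrder R]
    [IsStrictOrderedRing R] {k : ℕ} (hk : Even k) {b s x : R} (h : |s| ∈ uIcc |b| |x|) :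
    s ^ k ∈ uIcc (b ^ k) (x ^ k) := by
  rw [← hk.pow_abs s, ← hk.pow_abs b, ← hk.pow_abs x]
  refine (pow_left_monotoneOn.mono fun t ht => ?_).mapsTo_uIcc h
  rcases mem_uIcc.1 ht with ⟨ht, -⟩ | ⟨ht, -⟩ <;> exact (abs_nonneg _).trans ht

theorem nearest_kth_power_iff_local_general (k : ℕ) (m b : ℤ)
    (hk : 0 < k) (hke : Even k) :
    (∀ x : ℤ, |m - b ^ k| ≤ |m - x ^ k|) ↔
      (|m - b ^ k| < |m - (b + 1) ^ k| ∧ |m - b ^ k| < |m - (b - 1) ^ k|) := by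
  constructor
  · intro h
    refine ⟨(h _).lt_of_ne (Int.abs_sub_pow_ne_abs_sub_succ_pow m b hk.ne'),
      (h _).lt_of_ne fun heq => Int.abs_sub_pow_ne_abs_sub_succ_pow m (b - 1) hk.ne' ?_⟩
    rw [sub_add_cancel, heq]
  · rintro ⟨hsucc, hpred⟩ x
    by_cases hx : |x| = |b|
    · rw [← hke.pow_abs x, hx, hke.pow_abs]
    obtain ⟨s, hs, hsx⟩ := Int.exists_neighbour_abs_mem_uIcc hx
    have hlt : |m - b ^ k| < |m - s ^ k| := by rcases hs with rfl | rfl <;> assumption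
    exact (abs_sub_lt_of_lt_of_mem_uIcc (hke.pow_mem_uIcc_of_abs_mem_uIcc hsx) hlt).le

theorem nearest_kth_power_iff_local (k : ℕ) (m b : ℤ)
    (hk : 0 < k) (hke : Even k) (hm : m % 4 = 3) :
    (∀ x : ℤ, |m - b ^ k| ≤ |m - x ^ k|) ↔
      (|m - b ^ k| < |m - (b + 1) ^ k| ∧ |m - b ^ k| < |m - (b - 1) ^ k|) :=
  nearest_kth_power_iff_local_general k m b hk hke
end

section
/- If a, b are natural numbers, k is a positive even integer, m ≡ 3 (mod 4) is an integer, and |m − a^k| = |m − b^k|, then a = b. -/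
/-!
If `|m - a^k| = |m - b^k|` with `a ≠ b`, then `m - a^k = -(m - b^k)`, so `2m = a^k + b^k` is a sum
of two squares since `k` is even. But `2m ≡ 6 (mod 8)` when `m ≡ 3 (mod 4)`, and no sum of two squares
is `6` modulo `8`.
-/

theorem ZMod.sq_add_sq_ne_six : ∀ x y : ZMod 8, x ^ 2 + y ^ 2 ≠ 6 := by
  decide

theorem Int.two_mul_ne_sq_add_sq_of_emod_four_eq_three {m : ℤ} (hm : m % 4 = 3) (x y : ℤ) :
    2 * m ≠ x ^ 2 + y ^ 2 := by
  intro h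
  have h8 : ((2 * m : ℤ) : ZMod 8) = ((6 : ℤ) : ZMod 8) :=
    (ZMod.intCast_eq_intCast_iff' _ _ 8).2 (by omega)
  apply ZMod.sq_add_sq_ne_six x y
  rw [h] at h8
  exact_mod_cast h8

theorem nearest_kth_power_unique (a b : ℕ) (k : ℕ) (m : ℤ)
    (hk : 0 < k) (hke : Even k) (hm : m % 4 = 3)
    (h : |m - (a : ℤ) ^ k| = |m - (b : ℤ) ^ k|) : a = b := by
  rcases abs_eq_abs.1 h with h_eq | h_neg
  · have hpow : (a : ℤ) ^ k = (b : ℤ) ^ k := by linarith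
    exact Nat.pow_left_injective hk.ne' (by exact_mod_cast hpow)
  · obtain ⟨j, rfl⟩ := hke
    have hsum : 2 * m = ((a : ℤ) ^ j) ^ 2 + ((b : ℤ) ^ j) ^ 2 := by
      rw [← pow_mul, ← pow_mul, mul_two]
      linarith
    exact absurd hsum (Int.two_mul_ne_sq_add_sq_of_emod_four_eq_three hm _ _)
end

section
/- Let δ be a positive integer, ν ∈ ℕ, z₀, …, z_ν ∈ ℕ, and let P(z₀, …, z_ν) = Σ a_{i₀,…,i_ν} z₀^{i₀}⋯z_ν^{i_ν} (sum over i₀ + ⋯ + i_ν ≤ δ) with integer coefficients satisfying |a_{i₀,…,i_ν}| ≤ L for a positive integer L. Define C(x) = (1 + Σ_{i=0}^ν zᵢ x^{(δ+1)^i})^δ and D(x) = Σ i₀!⋯i_ν!(δ−i₀−⋯−i_ν)! a_{i₀,…,i_ν} x^{(δ+1)^{ν+1} − Σ_j i_j(δ+1)^j}. Let B be an integer with B > 2(1 + z₀ + ⋯ + z_ν)^δ δ! L. Then the coefficient of x^{(δ+1)^{ν+1}} in the polynomial C(x)D(x) equals δ!·P(z₀, …, z_ν), and every coefficient of C(x)D(x)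 has absolute value less than B/2. -/
/-!
By the multinomial theorem, `C(x) = (1 + ∑ zⱼ x^{(δ+1)^j})^δ` has, at the exponent whose base-`(δ+1)`
digits are `i₀, …, i_ν`, the coefficient `δ! / (i₀! ⋯ i_ν! (δ - ∑ iⱼ)!) · z^i`; since the digits are
at most `δ`, no two monomials of the expansion share an exponent. `D` is built so that its monomial
with weight `a_i` sits at the complementary exponent `(δ+1)^{ν+1} - ∑ iⱼ (δ+1)^j`, so the coefficient
of `x^{(δ+1)^{ν+1}}` in `C·D` collects exactly `δ! · a_i z^i`. For the bound, `C` has nonnegative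
coefficients with sum `C(1) = (1 + ∑ zⱼ)^δ`, and every coefficient of `D` is at most `δ! L` in
absolute value.
-/

open Polynomial Finset

namespace Nat

lemma sum_mul_pow_injOn (n b : ℕ) :
    Set.InjOn (fun f : Fin n → ℕ => ∑ j, f j * b ^ (j : ℕ)) {f | ∀ j, f j < b} := by
  intro f hf g hg hfg
  have h : (fun j => (⟨f j, hf j⟩ : Fin b)) = fun j => ⟨g j, hg j⟩ :=
    finFunctionFinEquiv.injective (Fin.ext hfg)
  funext j
  exact congrArg Fin.val (congrFun h j)

lemma prod_factorial_mul_factorial_sub_dvd {ι : Type*} (s : Finset ι) (k : ι → ℕ) {n : ℕ}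
    (h : ∑ i ∈ s, k i ≤ n) : (∏ i ∈ s, (k i)!) * (n - ∑ i ∈ s, k i)! ∣ n ! :=
  (Nat.mul_dvd_mul_right (prod_factorial_dvd_factorial_sum s k) _).trans
    (factorial_mul_factorial_dvd_factorial h)

end Nat

namespace Polynomial

variable {R ι : Type*}

section Semiring

variable [Semiring R] {s : Finset ι} {c : ι → R} {e : ι → ℕ}

lemma coeff_sum_C_mul_X_pow_of_injOn (he : Set.InjOn e s) {i : ι} (hi : i ∈ s) :
    (∑ j ∈ s, C (c j) * X ^ e j).coeff (e i) = c i := by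
  rw [finsetSum_coeff, sum_eq_single_of_mem i hi]
  · rw [coeff_C_mul_X_pow, if_pos rfl]
  · intro j hj hji
    rw [coeff_C_mul_X_pow, if_neg fun h => hji (he hj hi h.symm)]

lemma coeff_sum_C_mul_X_pow_of_forall_ne {n : ℕ} (hn : ∀ i ∈ s, e i ≠ n) :
    (∑ j ∈ s, C (c j) * X ^ e j).coeff n = 0 := by
  rw [finsetSum_coeff]
  exact sum_eq_zero fun i hi => by rw [coeff_C_mul_X_pow, if_neg (hn i hi).symm]

lemma coeff_mul_sum_C_mul_X_pow_sub (p : R[X]) {N : ℕ} (he : ∀ i ∈ s, e i ≤ N) :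
    (p * ∑ i ∈ s, C (c i) * X ^ (N - e i)).coeff N = ∑ i ∈ s, p.coeff (e i) * c i := by
  rw [mul_sum, finsetSum_coeff]
  refine sum_congr rfl fun i hi => ?_
  rw [← mul_assoc, coeff_mul_X_pow', if_pos (N.sub_le _), Nat.sub_sub_self (he i hi),
    coeff_mul_C]

end Semiring

section Ordered

variable [CommRing R] [LinearOrder R] [IsStrictOrderedRing R]

lemma abs_coeff_sum_C_mul_X_pow_le {s : Finset ι} {c : ι → R} {e : ι → ℕ} {M : R}
    (he : Set.InjOn e s) (hc : ∀ i ∈ s, |c i| ≤ M) (hM : 0 ≤ M) (n : ℕ) :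
    |(∑ i ∈ s, C (c i) * X ^ e i).coeff n| ≤ M := by
  by_cases h : ∃ i ∈ s, e i = n
  · obtain ⟨i, hi, rfl⟩ := h
    rw [coeff_sum_C_mul_X_pow_of_injOn he hi]
    exact hc i hi
  · rwa [coeff_sum_C_mul_X_pow_of_forall_ne fun i hi hin => h ⟨i, hi, hin⟩, abs_zero]

lemma sum_range_coeff_le_eval_one {p : R[X]} (hp : ∀ n, 0 ≤ p.coeff n) (k : ℕ) :
    ∑ m ∈ range k, p.coeff m ≤ p.eval 1 := by
  rw [eval_eq_sum_range' (n := max k (p.natDegree + 1)) (by omega)]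
  simp only [one_pow, mul_one]
  exact sum_le_sum_of_subset_of_nonneg (range_subset_range.mpr (le_max_left _ _))
    fun m _ _ => hp m

lemma abs_coeff_mul_le_eval_one_mul {p q : R[X]} {M : R} (hp : ∀ n, 0 ≤ p.coeff n)
    (hq : ∀ n, |q.coeff n| ≤ M) (k : ℕ) : |(p * q).coeff k| ≤ p.eval 1 * M :=
  calc |(p * q).coeff k|
      ≤ ∑ x ∈ antidiagonal k, |p.coeff x.1 * q.coeff x.2| := by
        rw [coeff_mul]
        exact abs_sum_le_sum_abs _ _
    _ ≤ ∑ x ∈ antidiagonal k, p.coeff x.1 * M := sum_le_sum fun x _ => by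
        rw [abs_mul, abs_of_nonneg (hp _)]
        exact mul_le_mul_of_nonneg_left (hq _) (hp _)
    _ = (∑ m ∈ range (k + 1), p.coeff m) * M := by
        rw [Nat.sum_antidiagonal_eq_sum_range_succ_mk, sum_mul]
    _ ≤ p.eval 1 * M :=
        mul_le_mul_of_nonneg_right (sum_range_coeff_le_eval_one hp _) ((abs_nonneg _).trans (hq 0))

lemma abs_natCast_prod_factorial_mul_le {n δ : ℕ} {k : Fin n → ℕ} {x L : R}
    (hx₀ : δ < ∑ j, k j → x = 0) (hx : |x| ≤ L) :
    |((∏ j, (k j).factorial) * (δ - ∑ j, k j).factorial : ℕ) * x| ≤ δ.factorial * L := by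
  rcases le_or_gt (∑ j, k j) δ with hk | hk
  · rw [abs_mul, Nat.abs_cast]
    refine mul_le_mul ?_ hx (abs_nonneg _) (by positivity)
    exact_mod_cast Nat.le_of_dvd δ.factorial_pos (Nat.prod_factorial_mul_factorial_sub_dvd _ _ hk)
  · simpa [hx₀ hk] using mul_nonneg (by positivity) ((abs_nonneg x).trans hx)

end Ordered

section Kronecker

variable {n b δ : ℕ} [CommSemiring R]

lemma one_add_sum_C_mul_X_pow_pow_eq (z : Fin n → R) :
    (1 + ∑ j, C (z j) * X ^ b ^ (j : ℕ)) ^ δ =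
      ∑ k ∈ piAntidiag univ δ, C (Nat.multinomial univ k * ∏ j, z j ^ k (some j)) *
        X ^ ∑ j, k (some j) * b ^ (j : ℕ) := by
  have h1 : 1 + ∑ j, C (z j) * X ^ b ^ (j : ℕ) =
      ∑ t : Option (Fin n), t.elim 1 fun j => C (z j) * X ^ b ^ (j : ℕ) := by
    rw [Fintype.sum_option]
    rfl
  rw [h1, sum_pow_eq_sum_piAntidiag]
  refine sum_congr rfl fun k _ => ?_
  simp only [Fintype.prod_option, Option.elim_none, Option.elim_some, one_pow, one_mul, mul_pow,
    ← C_pow, ← pow_mul, prod_mul_distrib, ← map_prod, prod_pow_eq_pow_sum, map_mul, map_natCast,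
    mul_assoc, mul_comm (b ^ _)]

lemma coeff_one_add_sum_C_mul_X_pow_pow (z : Fin n → R) (hb : δ < b)
    {k : Option (Fin n) → ℕ} (hk : k ∈ piAntidiag univ δ) :
    ((1 + ∑ j, C (z j) * X ^ b ^ (j : ℕ)) ^ δ).coeff (∑ j, k (some j) * b ^ (j : ℕ)) =
      Nat.multinomial univ k * ∏ j, z j ^ k (some j) := by
  -- all parts of `k` are `≤ δ < b`, so they are base-`b` digits and no carries occur
  have hdigit : ∀ {k : Option (Fin n) → ℕ}, k ∈ piAntidiag univ δ → ∀ j, k (some j) < b :=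
    fun hk j => (single_le_sum (fun _ _ => Nat.zero_le _) (mem_univ (some j))).trans
      (mem_piAntidiag.1 hk).1.le |>.trans_lt hb
  rw [one_add_sum_C_mul_X_pow_pow_eq]
  refine coeff_sum_C_mul_X_pow_of_injOn (fun k hk k' hk' hkk' => ?_) hk
  have hsome : (fun j => k (some j)) = fun j => k' (some j) :=
    Nat.sum_mul_pow_injOn n b (hdigit hk) (hdigit hk') hkk'
  have hsum := (mem_piAntidiag.1 hk).1.trans (mem_piAntidiag.1 hk').1.symm
  rw [Fintype.sum_option, Fintype.sum_option, hsome, add_left_inj] at hsum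
  funext t
  cases t with
  | none => exact hsum
  | some j => exact congrFun hsome j

lemma factorial_mul_coeff_one_add_sum_C_mul_X_pow_pow (z : Fin n → R) (hb : δ < b)
    {k : Fin n → ℕ} (hk : ∑ j, k j ≤ δ) :
    (((∏ j, (k j).factorial) * (δ - ∑ j, k j).factorial : ℕ) : R) *
        ((1 + ∑ j, C (z j) * X ^ b ^ (j : ℕ)) ^ δ).coeff (∑ j, k j * b ^ (j : ℕ)) =
      δ.factorial * ∏ j, z j ^ k j := by
  set k' : Option (Fin n) → ℕ := fun t => t.elim (δ - ∑ j, k j) k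
  have hk' : k' ∈ piAntidiag univ δ := by
    rw [mem_piAntidiag, Fintype.sum_option]
    exact ⟨by simp only [Option.elim_none, Option.elim_some]; omega, fun t _ => mem_univ t⟩
  have hspec := Nat.multinomial_spec univ k'
  rw [(mem_piAntidiag.1 hk').1, Fintype.prod_option] at hspec
  rw [show ∑ j, k j * b ^ (j : ℕ) = ∑ j, k' (some j) * b ^ (j : ℕ) from rfl,
    coeff_one_add_sum_C_mul_X_pow_pow z hb hk', ← mul_assoc, ← Nat.cast_mul, ← hspec]
  simp only [k', Option.elim_none, Option.elim_some, mul_comm (∏ j, _)]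

lemma coeff_one_add_sum_C_mul_X_pow_pow_nonneg [PartialOrder R] [IsOrderedRing R]
    {z : Fin n → R} (hz : ∀ j, 0 ≤ z j) (m : ℕ) :
    0 ≤ ((1 + ∑ j, C (z j) * X ^ b ^ (j : ℕ)) ^ δ).coeff m := by
  rw [one_add_sum_C_mul_X_pow_pow_eq, finsetSum_coeff]
  refine sum_nonneg fun k _ => ?_
  rw [coeff_C_mul_X_pow]
  split_ifs
  · exact mul_nonneg (Nat.cast_nonneg _) (prod_nonneg fun j _ => pow_nonneg (hz j) _)
  · exact le_rfl

end Kronecker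

end Polynomial

open Polynomial in
theorem coeff_CD_and_bound_general (δ ν : ℕ) (L : ℤ)
    (z : Fin (ν+1) → ℕ)
    (a : (Fin (ν+1) → Fin (δ+1)) → ℤ)
    (ha0 : ∀ i, δ < ∑ j, (i j : ℕ) → a i = 0)
    (haL : ∀ i, |a i| ≤ L)
    (B : ℤ)
    (hB : 2 * (1 + ∑ j, (z j : ℤ)) ^ δ * (Nat.factorial δ : ℤ) * L < B)
    (C D : ℤ[X])
    (hC : C = (1 + ∑ j : Fin (ν+1), Polynomial.C (z j : ℤ) * X ^ ((δ+1) ^ (j : ℕ))) ^ δ)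
    (hD : D = ∑ i : Fin (ν+1) → Fin (δ+1),
        Polynomial.C (((∏ j, Nat.factorial (i j)) *
            Nat.factorial (δ - ∑ j, (i j : ℕ)) : ℕ) * a i) *
          X ^ ((δ+1) ^ (ν+1) - ∑ j : Fin (ν+1), (i j : ℕ) * (δ+1) ^ (j : ℕ))) :
    (C * D).coeff ((δ+1) ^ (ν+1)) =
      (Nat.factorial δ : ℤ) *
        ∑ i : Fin (ν+1) → Fin (δ+1), a i * ∏ j, (z j : ℤ) ^ (i j : ℕ) ∧
    ∀ k : ℕ, 2 * |(C * D).coeff k| < B := by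
  -- `∑ j, i j * (δ+1)^j` is the number with base-`(δ+1)` digits `i`
  have hdigits_lt : ∀ i : Fin (ν+1) → Fin (δ+1),
      ∑ j, (i j : ℕ) * (δ+1) ^ (j : ℕ) < (δ+1) ^ (ν+1) := fun i => (finFunctionFinEquiv i).is_lt
  refine ⟨?_, fun k => ?_⟩
  · rw [hD, coeff_mul_sum_C_mul_X_pow_sub C fun i _ => (hdigits_lt i).le, mul_sum]
    refine sum_congr rfl fun i _ => ?_
    rcases le_or_gt (∑ j, (i j : ℕ)) δ with hi | hi
    · have hCi := factorial_mul_coeff_one_add_sum_C_mul_X_pow_pow (fun j => (z j : ℤ))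
        δ.lt_succ_self hi
      rw [← hC] at hCi
      linear_combination a i * hCi
    · simp [ha0 i hi]
  · have hD_le : ∀ m, |D.coeff m| ≤ δ.factorial * L := by
      rw [hD]
      refine abs_coeff_sum_C_mul_X_pow_le (fun i _ i' _ h => ?_)
        (fun i _ => abs_natCast_prod_factorial_mul_le (ha0 i) (haL i))
        (mul_nonneg (by positivity) ((abs_nonneg _).trans (haL 0)))
      have := hdigits_lt i
      have := hdigits_lt i'
      exact finFunctionFinEquiv.injective <| Fin.ext <|
        show ∑ j, (i j : ℕ) * (δ+1) ^ (j : ℕ) = ∑ j, (i' j : ℕ) * (δ+1) ^ (j : ℕ) by omega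
    have hC_nonneg : ∀ m, 0 ≤ C.coeff m :=
      hC ▸ coeff_one_add_sum_C_mul_X_pow_pow_nonneg fun j => Nat.cast_nonneg (z j)
    have hC_eval : C.eval 1 = (1 + ∑ j, (z j : ℤ)) ^ δ := by simp [hC, eval_finsetSum]
    have hCD := abs_coeff_mul_le_eval_one_mul hC_nonneg hD_le k
    rw [hC_eval] at hCD
    linarith

open Polynomial in
theorem coeff_CD_and_bound (δ ν : ℕ) (hδ : 0 < δ) (L : ℤ) (hL : 0 < L)
    (z : Fin (ν+1) → ℕ)
    (a : (Fin (ν+1) → Fin (δ+1)) → ℤ)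
    (ha0 : ∀ i, δ < ∑ j, (i j : ℕ) → a i = 0)
    (haL : ∀ i, |a i| ≤ L)
    (B : ℤ)
    (hB : 2 * (1 + ∑ j, (z j : ℤ)) ^ δ * (Nat.factorial δ : ℤ) * L < B)
    (C D : ℤ[X])
    (hC : C = (1 + ∑ j : Fin (ν+1), Polynomial.C (z j : ℤ) * X ^ ((δ+1) ^ (j : ℕ))) ^ δ)
    (hD : D = ∑ i : Fin (ν+1) → Fin (δ+1),
        Polynomial.C (((∏ j, Nat.factorial (i j)) *
            Nat.factorial (δ - ∑ j, (i j : ℕ)) : ℕ) * a i) *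
          X ^ ((δ+1) ^ (ν+1) - ∑ j : Fin (ν+1), (i j : ℕ) * (δ+1) ^ (j : ℕ))) :
    (C * D).coeff ((δ+1) ^ (ν+1)) =
      (Nat.factorial δ : ℤ) *
        ∑ i : Fin (ν+1) → Fin (δ+1), a i * ∏ j, (z j : ℤ) ^ (i j : ℕ) ∧
    ∀ k : ℕ, 2 * |(C * D).coeff k| < B :=
  coeff_CD_and_bound_general δ ν L z a ha0 haL B hB C D hC hD
end

section
/- For any integers S ≠ 0, T, and A₁, …, A_k: all of A₁, …, A_k are perfect squares and S divides T, if and only if there exists an integer x such that S^{2^k} · J_k(A₁, …, A_k, x + T/S) = 0, where J_k(x₁,…,x_k, x) = ∏_{ε₁,…,ε_k ∈ {±1}} (x + ε₁√x₁ + ε₂√x₂·X + ⋯ + ε_k√x_k·X^{k−1}) with X = 1 + Σ_{j=1}^k x_j², a polynomial with integer coefficients. -/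
/-!
If every `A j = m j ^ 2`, then each `s j` is an integer and the factor of `J_k` with all signs
`+` vanishes at an integer. Conversely, a vanishing factor says that `∑ c j * X ^ j` is
rational, where `c j = ± s j`. If some `c j₀` were irrational, a `ℚ`-embedding `φ` of `ℚ(c)` into
`ℂ` sending `c j₀` to `-c j₀` sends every `c j` to `± c j` and fixes the sum, so the numbers
`e j = (c j - φ (c j)) / 2 ∈ {0, c j}` satisfy `∑ e j * X ^ j = 0`. As `1 ≤ ‖e j‖ ≤ X - 1`
whenever `e j ≠ 0`, this base-`X` expansion of `0` must be trivial, contradicting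
`e j₀ = c j₀ ≠ 0`. Hence every `c j` is rational, so an integer, and `T / S` is an integer.
-/

/-- The Matiyasevich–Robinson polynomial `J_k`, evaluated via a choice of
complex square roots `s j` of the `A j` (the value is independent of the
choice of signs, and equals the value of the integer-coefficient polynomial
`J_k(A₁,…,A_k, x)`). -/
noncomputable def MRJ (k : ℕ) (A : Fin k → ℤ) (s : Fin k → ℂ) (x : ℂ) : ℂ :=
  ∏ ε : Fin k → Bool,
    (x + ∑ j : Fin k, (if ε j then (1 : ℂ) else -1) * s j *
      ((1 : ℂ) + ∑ l : Fin k, ((A l : ℂ)) ^ 2) ^ (j : ℕ))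

open Finset IntermediateField

section BaseExpansion

variable {𝕜 : Type*} [RCLike 𝕜] {X : ℝ}

theorem norm_sum_mul_pow_add_one_le {n : ℕ} (e : Fin n → 𝕜) (he : ∀ j, ‖e j‖ + 1 ≤ X) :
    ‖∑ j, e j * (X : 𝕜) ^ (j : ℕ)‖ + 1 ≤ X ^ n := by
  induction n with
  | zero => simp
  | succ n ih =>
    have hX : 0 ≤ X := by linarith [he (Fin.last n), norm_nonneg (e (Fin.last n))]
    rw [Fin.sum_univ_castSucc]
    calc _ ≤ ‖∑ j : Fin n, e j.castSucc * (X : 𝕜) ^ (j : ℕ)‖ + ‖e (Fin.last n)‖ * X ^ n + 1 := by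
          grw [norm_add_le]
          simp [norm_mul, norm_pow, abs_of_nonneg hX]
      _ ≤ X ^ n + (X - 1) * X ^ n := by
          nlinarith [pow_nonneg hX n, he (Fin.last n), ih (fun j => e j.castSucc) fun j => he _]
      _ = X ^ (n + 1) := by ring

theorem eq_zero_of_sum_mul_pow_eq_zero {n : ℕ} (e : Fin n → 𝕜)
    (hone : ∀ j, e j ≠ 0 → 1 ≤ ‖e j‖) (hX : ∀ j, ‖e j‖ + 1 ≤ X)
    (hsum : ∑ j, e j * (X : 𝕜) ^ (j : ℕ) = 0) (j : Fin n) : e j = 0 := by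
  induction n with
  | zero => exact j.elim0
  | succ n ih =>
    simp only [Fin.sum_univ_castSucc, Fin.val_castSucc, Fin.val_last] at hsum
    have hlast : e (Fin.last n) = 0 := by
      by_contra h
      have hX0 : 0 ≤ X := by linarith [hX (Fin.last n), norm_nonneg (e (Fin.last n))]
      have hbound := norm_sum_mul_pow_add_one_le (fun j => e j.castSucc) (fun j => hX _)
      rw [eq_neg_of_add_eq_zero_left hsum, norm_neg, norm_mul, norm_pow, RCLike.norm_ofReal,
        abs_of_nonneg hX0] at hbound
      nlinarith [hone _ h, pow_nonneg hX0 n]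
    rw [hlast, zero_mul, add_zero] at hsum
    induction j using Fin.lastCases with
    | last => exact hlast
    | cast j => exact ih _ (fun j => hone _) (fun j => hX _) hsum j

end BaseExpansion

section Conjugation

variable {F L : Type*} [Field F] [Field L] [Algebra F L]

theorem IntermediateField.algHom_apply_eq_or_eq_neg {K : IntermediateField F L}
    (φ : K →ₐ[F] L) {x : K} {a : F} (hx : (x : L) ^ 2 = algebraMap F L a) :
    φ x = x ∨ φ x = -x := by
  have hxK : x ^ 2 = algebraMap F K a := Subtype.ext hx
  rw [← sq_eq_sq_iff_eq_or_eq_neg, ← map_pow, hxK, AlgHom.commutes, hx]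

open Polynomial in
theorem exists_algHom_adjoin_range_apply_eq_neg [IsAlgClosed L] {ι : Type*} (c : ι → L)
    (a : ι → F) (hc : ∀ j, c j ^ 2 = algebraMap F L (a j)) {j₀ : ι}
    (hj₀ : c j₀ ∉ Set.range (algebraMap F L)) :
    ∃ φ : adjoin F (Set.range c) →ₐ[F] L, φ ⟨c j₀, subset_adjoin F _ ⟨j₀, rfl⟩⟩ = -c j₀ := by
  have hroot : ∀ j, aeval (c j) (X ^ 2 - C (a j)) = 0 := fun j => by simp [hc j]
  have hmonic : ∀ j, (X ^ 2 - C (a j)).Monic := fun j => monic_X_pow_sub_C _ two_ne_zero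
  have hirr : Irreducible (X ^ 2 - C (a j₀)) := by
    refine X_pow_sub_C_irreducible_of_prime Nat.prime_two fun b hb => hj₀ ?_
    have : c j₀ ^ 2 = algebraMap F L b ^ 2 := by rw [hc, ← hb, map_pow]
    rcases sq_eq_sq_iff_eq_or_eq_neg.mp this with h | h
    · exact ⟨b, h.symm⟩
    · exact ⟨-b, by rw [h, map_neg]⟩
  refine exists_algHom_adjoin_of_splits_of_aeval ?_ _ ?_
  · rintro _ ⟨j, rfl⟩
    exact ⟨⟨_, hmonic j, hroot j⟩, IsAlgClosed.splits _⟩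
  · rw [← minpoly.eq_of_irreducible_of_monic hirr (hroot j₀) (hmonic j₀)]
    simp [hc j₀]

end Conjugation

theorem exists_intCast_eq_of_sq_eq_intCast_sq {R : Type*} [CommRing R] [NoZeroDivisors R]
    {c : R} {m : ℤ} (h : c ^ 2 = (m : R) ^ 2) : ∃ n : ℤ, c = n := by
  rcases sq_eq_sq_iff_eq_or_eq_neg.mp h with h | h
  · exact ⟨m, h⟩
  · exact ⟨-m, by rw [h, Int.cast_neg]⟩

section CharZero

variable {K : Type*} [Field K] [CharZero K]

theorem exists_intCast_eq_of_sq_eq_intCast {c : K} {A : ℤ} {r : ℚ} (hc : c ^ 2 = A)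
    (hr : c = r) : ∃ n : ℤ, c = n := by
  have hrA : ((r ^ 2 : ℚ) : K) = ((A : ℚ) : K) := by push_cast; rw [← hr, hc]
  obtain ⟨m, hm⟩ := Rat.isSquare_intCast_iff.mp ⟨r, by rw [← sq]; exact_mod_cast hrA.symm⟩
  exact exists_intCast_eq_of_sq_eq_intCast_sq (by rw [hc, hm]; push_cast; ring)

theorem dvd_of_intCast_div_eq_intCast {S T m : ℤ} (hS : (S : K) ≠ 0) (h : (T : K) / S = m) :
    S ∣ T :=
  Dvd.intro_left m (by exact_mod_cast ((div_eq_iff hS).mp h).symm)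

end CharZero

section SquareRootsOfIntegers

variable {𝕜 : Type*} [RCLike 𝕜] {c : 𝕜} {A : ℤ}

theorem norm_sq_eq_abs_of_sq_eq_intCast (hc : c ^ 2 = A) : ‖c‖ ^ 2 = |(A : ℝ)| := by
  rw [← norm_pow, hc, ← RCLike.ofReal_intCast, RCLike.norm_ofReal]

theorem one_le_norm_of_sq_eq_intCast (hc : c ^ 2 = A) (h0 : c ≠ 0) : 1 ≤ ‖c‖ := by
  have hA : A ≠ 0 := by rintro rfl; exact h0 (pow_eq_zero_iff two_ne_zero |>.mp (by simpa using hc))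
  have : (1 : ℝ) ≤ |(A : ℝ)| := by exact_mod_cast Int.one_le_abs hA
  nlinarith [norm_sq_eq_abs_of_sq_eq_intCast hc, norm_nonneg c]

theorem norm_le_abs_of_sq_eq_intCast (hc : c ^ 2 = A) : ‖c‖ ≤ |(A : ℝ)| := by
  rcases eq_or_ne c 0 with rfl | h0
  · simp
  · nlinarith [norm_sq_eq_abs_of_sq_eq_intCast hc, one_le_norm_of_sq_eq_intCast hc h0]

end SquareRootsOfIntegers

theorem exists_ratCast_eq_of_sum_mul_pow_eq_ratCast {n : ℕ} (A : Fin n → ℤ) (c : Fin n → ℂ)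
    (hc : ∀ j, c j ^ 2 = A j) (X : ℤ) (hX : ∀ j, |A j| + 1 ≤ X) (q : ℚ)
    (hsum : ∑ j, c j * (X : ℂ) ^ (j : ℕ) = q) (j₀ : Fin n) : ∃ r : ℚ, c j₀ = r := by
  by_contra! hj₀
  have hc' : ∀ j, c j ^ 2 = algebraMap ℚ ℂ (A j) := fun j => by simp [hc j]
  obtain ⟨φ, hφ⟩ := exists_algHom_adjoin_range_apply_eq_neg c (fun j => (A j : ℚ)) hc'
    (j₀ := j₀) (by rintro ⟨r, hr⟩; exact hj₀ r (by simp [← hr]))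
  let cK : Fin n → adjoin ℚ (Set.range c) := fun j => ⟨c j, subset_adjoin ℚ _ ⟨j, rfl⟩⟩
  have hsumK : ∑ j, cK j * (X : adjoin ℚ (Set.range c)) ^ (j : ℕ) = q :=
    Subtype.ext (by simpa [cK] using hsum)
  have hφsum : ∑ j, φ (cK j) * (X : ℂ) ^ (j : ℕ) = q := by
    simpa using congrArg φ hsumK
  set e : Fin n → ℂ := fun j => (c j - φ (cK j)) / 2 with he
  have he_cases : ∀ j, e j = 0 ∨ e j = c j := fun j => by
    rcases algHom_apply_eq_or_eq_neg φ (x := cK j) (hc' j) with h | h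
    · left; simp [he, h, cK]
    · right; simp only [he, h, cK]; ring
  have he_sum : ∑ j, e j * ((X : ℝ) : ℂ) ^ (j : ℕ) = 0 := by
    have : ∑ j, e j * (X : ℂ) ^ (j : ℕ) =
        (∑ j, c j * (X : ℂ) ^ (j : ℕ) - ∑ j, φ (cK j) * (X : ℂ) ^ (j : ℕ)) / 2 := by
      rw [← Finset.sum_sub_distrib, Finset.sum_div]
      exact Finset.sum_congr rfl fun j _ => by ring
    push_cast
    rw [this, hsum, hφsum, sub_self, zero_div]
  have hone : ∀ j, e j ≠ 0 → 1 ≤ ‖e j‖ := fun j hj => by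
    rcases he_cases j with h | h
    · exact absurd h hj
    · exact h ▸ one_le_norm_of_sq_eq_intCast (hc j) (h ▸ hj)
  have hnorm : ∀ j, ‖e j‖ + 1 ≤ (X : ℝ) := fun j => by
    have hle : ‖e j‖ ≤ ‖c j‖ := by rcases he_cases j with h | h <;> simp [h]
    have hXj : |(A j : ℝ)| + 1 ≤ X := by exact_mod_cast hX j
    linarith [norm_le_abs_of_sq_eq_intCast (hc j)]
  have he₀ : e j₀ = c j₀ := by
    change (c j₀ - φ (cK j₀)) / 2 = c j₀
    rw [show φ (cK j₀) = -c j₀ from hφ]; ring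
  exact hj₀ 0 (by rw [Rat.cast_zero, ← he₀, eq_zero_of_sum_mul_pow_eq_zero e hone hnorm he_sum j₀])

theorem abs_add_one_le_one_add_sum_sq {ι : Type*} [Fintype ι] (A : ι → ℤ) (j : ι) :
    |A j| + 1 ≤ 1 + ∑ l, A l ^ 2 := by
  have := single_le_sum (fun l _ => sq_nonneg (A l)) (mem_univ j)
  nlinarith [Int.le_self_sq (A j), sq_abs (A j)]

theorem MRJ_eq_zero_iff (k : ℕ) (A : Fin k → ℤ) (s : Fin k → ℂ) (x : ℂ) :
    MRJ k A s x = 0 ↔ ∃ ε : Fin k → Bool,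
      x + ∑ j, (if ε j then 1 else -1) * s j * ((1 + ∑ l, A l ^ 2 : ℤ) : ℂ) ^ (j : ℕ) = 0 := by
  simp [MRJ, prod_eq_zero_iff]

theorem all_squares_and_dvd_iff_MRJ_shifted_root (k : ℕ) (A : Fin k → ℤ)
    (S T : ℤ) (hS : S ≠ 0)
    (s : Fin k → ℂ) (hs : ∀ j, s j ^ 2 = (A j : ℂ)) :
    ((∀ j, ∃ m : ℤ, A j = m ^ 2) ∧ S ∣ T) ↔
      ∃ x : ℤ, (S : ℂ) ^ (2 ^ k) * MRJ k A s ((x : ℂ) + (T : ℂ) / (S : ℂ)) = 0 := by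
  have hSc : (S : ℂ) ≠ 0 := Int.cast_ne_zero.mpr hS
  simp only [mul_eq_zero, pow_eq_zero_iff', hSc, false_and, false_or, MRJ_eq_zero_iff]
  set X : ℤ := 1 + ∑ l, A l ^ 2
  constructor
  · rintro ⟨hsq, t, rfl⟩
    choose m hm using hsq
    choose n hn using fun j => exists_intCast_eq_of_sq_eq_intCast_sq (c := s j) (m := m j)
      (by rw [hs, hm, Int.cast_pow])
    refine ⟨-t - ∑ j, n j * X ^ (j : ℕ), fun _ => true, ?_⟩
    simp only [hn, if_true, one_mul]
    push_cast
    field_simp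
    ring
  · rintro ⟨x, ε, hε⟩
    set c : Fin k → ℂ := fun j => (if ε j then 1 else -1) * s j
    have hc : ∀ j, c j ^ 2 = A j := fun j => by rw [← hs]; cases ε j <;> simp [c]
    have hsum : ∑ j, c j * (X : ℂ) ^ (j : ℕ) = ((-x - T / S : ℚ) : ℂ) := by
      push_cast
      linear_combination hε
    choose n hn using fun j => (exists_ratCast_eq_of_sum_mul_pow_eq_ratCast A c hc X
      (abs_add_one_le_one_add_sum_sq A) _ hsum j).elim fun _ hr =>
        exists_intCast_eq_of_sq_eq_intCast (hc j) hr
    refine ⟨fun j => ⟨n j, by exact_mod_cast (hn j ▸ hc j).symm⟩,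
      dvd_of_intCast_div_eq_intCast hSc (m := -x - ∑ j, n j * X ^ (j : ℕ)) ?_⟩
    simp only [hn] at hsum
    push_cast at hsum ⊢
    linear_combination hsum
end

section
/- Let C₁, …, Cₙ, D₁, …, Dₙ be integers with Dᵢ ≥ 0 and |Cᵢ| ≤ Dᵢ for each i. Then (C₁ ≥ 0 ∨ ⋯ ∨ Cₙ ≥ 0) if and only if for all integers x₁ ∈ [0, D₁], …, xₙ ∈ [0, Dₙ] there exist integers y, z with (x₁ + C₁ + 1)² + ⋯ + (xₙ + Cₙ + 1)² = (2y+1)(3z+1). -/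
/-!
Every nonzero integer is `(-2)^k * t` with `t` odd, and `(-2)^k ≡ 1 [ZMOD 3]`; so the integers of
the form `(2y+1)(3z+1)` are exactly the nonzero ones. A sum of squares is nonzero iff one of its
terms is, and for `|c| ≤ d` the only `x ∈ [0, d]` with `x + c + 1 = 0` is `x = -c - 1`, which lies
in that range exactly when `c < 0`.
-/

lemma Int.exists_neg_two_pow_eq_three_mul_add_one (k : ℕ) : ∃ z : ℤ, (-2) ^ k = 3 * z + 1 := by
  obtain ⟨z, hz⟩ := sub_dvd_pow_sub_pow (-2 : ℤ) 1 k
  exact ⟨-z, by rw [one_pow] at hz; linarith⟩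

lemma Int.exists_eq_neg_two_pow_mul_odd {m : ℤ} (hm : m ≠ 0) :
    ∃ (k : ℕ) (t : ℤ), Odd t ∧ m = (-2) ^ k * t := by
  have hfin : FiniteMultiplicity (-2 : ℤ) m := Int.finiteMultiplicity_iff.mpr ⟨by decide, hm⟩
  obtain ⟨t, hmt, hndvd⟩ := hfin.exists_eq_pow_mul_and_not_dvd
  exact ⟨_, t, Int.not_even_iff_odd.mp fun ht => hndvd (neg_dvd.mpr (even_iff_two_dvd.mp ht)), hmt⟩

lemma Int.ne_zero_iff_exists_eq_odd_mul_three_mul_add_one (m : ℤ) :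
    m ≠ 0 ↔ ∃ y z : ℤ, m = (2 * y + 1) * (3 * z + 1) := by
  constructor
  · intro hm
    obtain ⟨k, t, ⟨y, rfl⟩, rfl⟩ := Int.exists_eq_neg_two_pow_mul_odd hm
    obtain ⟨z, hz⟩ := Int.exists_neg_two_pow_eq_three_mul_add_one k
    exact ⟨y, z, by rw [hz, mul_comm]⟩
  · rintro ⟨y, z, rfl⟩
    exact mul_ne_zero (by omega) (by omega)

lemma Finset.sum_sq_ne_zero_iff {ι R : Type*} [CommRing R] [LinearOrder R] [IsStrictOrderedRing R]
    {s : Finset ι} {f : ι → R} : ∑ i ∈ s, f i ^ 2 ≠ 0 ↔ ∃ i ∈ s, f i ≠ 0 := by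
  simp [Finset.sum_eq_zero_iff_of_nonneg fun i _ => sq_nonneg (f i)]

theorem exists_nonneg_iff_bounded_forall_general (n : ℕ) (C D : Fin n → ℤ)
    (hCD : ∀ i, |C i| ≤ D i) :
    (∃ i, 0 ≤ C i) ↔
      ∀ x : Fin n → ℤ, (∀ i, 0 ≤ x i ∧ x i ≤ D i) →
        ∃ y z : ℤ, ∑ i, (x i + C i + 1) ^ 2 = (2*y + 1) * (3*z + 1) := by
  simp only [← Int.ne_zero_iff_exists_eq_odd_mul_three_mul_add_one, Finset.sum_sq_ne_zero_iff,
    Finset.mem_univ, true_and]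
  constructor
  · rintro ⟨i, hi⟩ x hx
    exact ⟨i, by linarith [(hx i).1]⟩
  · intro h
    by_contra! hC
    obtain ⟨i, hi⟩ := h (fun i => -C i - 1) fun i =>
      ⟨by linarith [hC i], by linarith [neg_abs_le (C i), hCD i]⟩
    exact hi (by ring)

theorem exists_nonneg_iff_bounded_forall (n : ℕ) (C D : Fin n → ℤ)
    (hD : ∀ i, 0 ≤ D i) (hCD : ∀ i, |C i| ≤ D i) :
    (∃ i, 0 ≤ C i) ↔
      ∀ x : Fin n → ℤ, (∀ i, 0 ≤ x i ∧ x i ≤ D i) →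
        ∃ y z : ℤ, ∑ i, (x i + C i + 1) ^ 2 = (2*y + 1) * (3*z + 1) :=
  exists_nonneg_iff_bounded_forall_general n C D hCD
end

section
/- Let C₁, …, Cₙ be integers. Then C₁ ≥ 0 ∧ ⋯ ∧ Cₙ ≥ 0 if and only if for every nonzero integer x and every integer y, ∏_{i=1}^n ((4Cᵢ+2)x² + y² − 1) ≠ 0. -/
/-!
For `C ≥ 0` and `x ≠ 0` every factor is at least `2x² - 1 > 0`. For `C < 0` put
`d = -(4C + 2) > 0`; since `d ≡ 2 (mod 4)` it is not a square, so Pell's equation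
`y² - d x² = 1` has a solution with `x ≠ 0`, and that solution kills the factor for `C`.
-/

lemma not_isSquare_of_emod_four_eq_two {d : ℤ} (hd : d % 4 = 2) : ¬IsSquare d := by
  rintro ⟨r, rfl⟩
  exact Int.sq_ne_two_mod_four r hd

lemma pell_factor_pos {C x : ℤ} (hC : 0 ≤ C) (hx : x ≠ 0) (y : ℤ) :
    0 < (4 * C + 2) * x ^ 2 + y ^ 2 - 1 := by
  have hx2 : 0 < x ^ 2 := by positivity
  nlinarith [sq_nonneg y]

lemma exists_pell_factor_eq_zero {C : ℤ} (hC : C < 0) :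
    ∃ x ≠ 0, ∃ y : ℤ, (4 * C + 2) * x ^ 2 + y ^ 2 - 1 = 0 := by
  have hd : ¬IsSquare (-(4 * C + 2)) := not_isSquare_of_emod_four_eq_two (by omega)
  obtain ⟨y, x, hyx, hx⟩ := Pell.exists_of_not_isSquare (by omega) hd
  exact ⟨x, hx, y, by linear_combination hyx⟩

theorem all_nonneg_iff_product_ne_zero (n : ℕ) (C : Fin n → ℤ) :
    (∀ i, 0 ≤ C i) ↔
      ∀ x : ℤ, x ≠ 0 → ∀ y : ℤ,
        (∏ i, ((4 * C i + 2) * x ^ 2 + y ^ 2 - 1)) ≠ 0 := by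
  refine ⟨fun hC x hx y => ?_, fun h i => ?_⟩
  · exact Finset.prod_ne_zero_iff.mpr fun i _ => (pell_factor_pos (hC i) hx y).ne'
  · by_contra! hCi
    obtain ⟨x, hx, y, hxy⟩ := exists_pell_factor_eq_zero hCi
    exact h x hx y (Finset.prod_eq_zero (Finset.mem_univ i) hxy)
end

section
/- Let b₀ ≥ 2 be an even integer, n ≥ 1 an integer, and c an integer with b₀² + 4 dividing c and 0 < c < (b₀² + 4)ⁿ. Set k = 4n, q = (b₀^k + c)/4 (an integer), and m = 4q − 1. Then |m − b₀^k| < |m − (b₀+1)^k| and |m − b₀^k| < |m − (b₀−1)^k|; moreover, for any integer b, if |m − b^k| = min over x ∈ ℤ of |m − x^k|, then |b| = |b₀| and 4q − b^k = c. -/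
/-!
Write `K = 4n` and `m = 4q - 1`, so that `m - b₀ ^ K = c - 1 ≥ 0`. Since `c < (b₀² + 4)ⁿ ≤ b₀ ^ (K - 1)`
and Bernoulli's inequality gives `(b₀ + 1) ^ K - b₀ ^ K ≥ K b₀ ^ (K - 1)`, the offset `c - 1` is less
than half the gap between `b₀ ^ K` and `(b₀ + 1) ^ K`. Hence `b₀ ^ K` is strictly the nearest `K`-th
power to `m`, and as `K` is even every minimiser `b` has `|b| = b₀`.
-/

lemma sq_add_four_pow_le_pow {R : Type*} [CommRing R] [LinearOrder R] [IsStrictOrderedRing R]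
    {b : R} (hb : 2 ≤ b) {n : ℕ} (hn : 1 ≤ n) : (b ^ 2 + 4) ^ n ≤ b ^ (4 * n - 1) :=
  calc (b ^ 2 + 4) ^ n ≤ (2 * b ^ 2) ^ n := by gcongr; nlinarith
    _ = 2 ^ n * b ^ (2 * n) := by ring
    _ ≤ b ^ n * b ^ (2 * n) := by gcongr
    _ = b ^ (3 * n) := by ring
    _ ≤ b ^ (4 * n - 1) := pow_le_pow_right₀ (by linarith) (by omega)

lemma two_mul_sub_one_lt_add_one_pow_sub_pow {b c : ℤ} (hb : 2 ≤ b) {n : ℕ} (hn : 1 ≤ n)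
    (hc : c < (b ^ 2 + 4) ^ n) : 2 * (c - 1) < (b + 1) ^ (4 * n) - b ^ (4 * n) := by
  calc 2 * (c - 1) < 2 * b ^ (4 * n - 1) := by linarith [sq_add_four_pow_le_pow hb hn]
    _ ≤ ((4 * n : ℕ) : ℤ) * b ^ (4 * n - 1) := by gcongr; push_cast; omega
    _ ≤ (b + 1) ^ (4 * n) - b ^ (4 * n) := by
      linarith [pow_add_mul_le_add_pow (b := 1) (by linarith : 0 ≤ b) (by linarith) (4 * n)]

lemma abs_sub_pow_lt_of_abs_ne {K : ℕ} (hK : Even K) (hK0 : K ≠ 0) {a m : ℤ} (ha : 0 ≤ a)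
    (hlo : a ^ K ≤ m) (hhi : 2 * (m - a ^ K) < (a + 1) ^ K - a ^ K) {x : ℤ} (hx : |x| ≠ a) :
    |m - a ^ K| < |m - x ^ K| := by
  rw [← hK.pow_abs x, abs_of_nonneg (sub_nonneg.2 hlo)]
  rcases hx.lt_or_gt with hlt | hgt
  · have : |x| ^ K < a ^ K := pow_lt_pow_left₀ hlt (abs_nonneg x) hK0
    exact (by linarith : m - a ^ K < m - |x| ^ K).trans_le (le_abs_self _)
  · have : (a + 1) ^ K ≤ |x| ^ K := pow_le_pow_left₀ (by linarith) (by omega) K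
    exact (by linarith : m - a ^ K < -(m - |x| ^ K)).trans_le (neg_le_abs _)

theorem nearest_power_recovers_c_general (b₀ : ℤ) (n : ℕ) (c q : ℤ)
    (hb₀ : 2 ≤ b₀) (hn : 1 ≤ n)
    (hc0 : 0 < c) (hc1 : c < (b₀ ^ 2 + 4) ^ n)
    (hq : 4 * q = b₀ ^ (4 * n) + c) :
    |4 * q - 1 - b₀ ^ (4 * n)| < |4 * q - 1 - (b₀ + 1) ^ (4 * n)| ∧
    |4 * q - 1 - b₀ ^ (4 * n)| < |4 * q - 1 - (b₀ - 1) ^ (4 * n)| ∧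
    ∀ b : ℤ, (∀ x : ℤ, |4 * q - 1 - b ^ (4 * n)| ≤ |4 * q - 1 - x ^ (4 * n)|) →
      (|b| = |b₀| ∧ 4 * q - b ^ (4 * n) = c) := by
  have hK : Even (4 * n) := ⟨2 * n, by ring⟩
  have hgap := two_mul_sub_one_lt_add_one_pow_sub_pow hb₀ hn hc1
  have nearest {x : ℤ} (hx : |x| ≠ b₀) :
      |4 * q - 1 - b₀ ^ (4 * n)| < |4 * q - 1 - x ^ (4 * n)| :=
    abs_sub_pow_lt_of_abs_ne hK (by omega) (by linarith) (by linarith) (by linarith) hx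
  refine ⟨nearest (by rw [abs_of_nonneg (by linarith)]; omega),
    nearest (by rw [abs_of_nonneg (by linarith)]; omega), fun b hb => ?_⟩
  have hb_abs : |b| = b₀ := by
    by_contra hne
    exact (nearest hne).not_ge (hb b₀)
  refine ⟨by rw [hb_abs, abs_of_nonneg (by linarith)], ?_⟩
  rw [← hK.pow_abs, hb_abs]
  linarith

theorem nearest_power_recovers_c (b₀ : ℤ) (n : ℕ) (c q : ℤ)
    (hb₀ : 2 ≤ b₀) (hb₀e : Even b₀) (hn : 1 ≤ n)
    (hdvd : (b₀ ^ 2 + 4) ∣ c) (hc0 : 0 < c) (hc1 : c < (b₀ ^ 2 + 4) ^ n)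
    (hq : 4 * q = b₀ ^ (4 * n) + c) :
    |4 * q - 1 - b₀ ^ (4 * n)| < |4 * q - 1 - (b₀ + 1) ^ (4 * n)| ∧
    |4 * q - 1 - b₀ ^ (4 * n)| < |4 * q - 1 - (b₀ - 1) ^ (4 * n)| ∧
    ∀ b : ℤ, (∀ x : ℤ, |4 * q - 1 - b ^ (4 * n)| ≤ |4 * q - 1 - x ^ (4 * n)|) →
      (|b| = |b₀| ∧ 4 * q - b ^ (4 * n) = c) :=
  nearest_power_recovers_c_general b₀ n c q hb₀ hn hc0 hc1 hq
end
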